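/- arXiv:math/0512219 — 6 statements merged into one kernel-verified Lean document; each statement's English description precedes it below -/
import Mathlib

section
/- Let g : ℝ × ℝ^d → ℝ^d be a smooth map such that θ ↦ g(θ,·) is a one-parameter group action, i.e. g(0,·) is the identity of ℝ^d and g(θ₁+θ₂, x) = g(θ₁, g(θ₂, x)) for all θ₁, θ₂ ∈ ℝ and x ∈ ℝ^d. Let (f_ε)_{ε∈(0,1)} be a moderate net of smooth functions ℝ^d → ℂ. Suppose that for every θ ∈ ℝ the net (x ↦ f_ε(g(θ,x)) − f_ε(x))_ε is negligible. Then for every bounded family (θ_ε)_{ε∈(0,1)} of real numbers (i.e. there is C > 0 with |θ_ε| ≤ C for all ε), the net (x ↦ f_ε(g(θ_ε, x)) − f_ε(x))_ε is negligible. -/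
/-- A net `(u_ε)_{ε∈(0,1)}` of smooth functions `ℝ^d → ℂ` is moderate if for every
compact `K` and every order `n` of differentiation there are `b ∈ ℝ`, `C > 0`, `ε₀ > 0`
with `sup_{x∈K} ‖D^n u_ε(x)‖ ≤ C ε^b` for all `ε < ε₀`. -/
def Moderate {d : ℕ} (u : ℝ → (Fin d → ℝ) → ℂ) : Prop :=
  ∀ K : Set (Fin d → ℝ), IsCompact K → ∀ n : ℕ,
    ∃ b : ℝ, ∃ C > (0 : ℝ), ∃ ε₀ > (0 : ℝ), ∀ ε ∈ Set.Ioo (0 : ℝ) 1, ε < ε₀ →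
      ∀ x ∈ K, ‖iteratedFDeriv ℝ n (u ε) x‖ ≤ C * ε ^ b

/-- Negligibility: the moderateness estimate holds for every exponent `b`. -/
def Negligible {d : ℕ} (u : ℝ → (Fin d → ℝ) → ℂ) : Prop :=
  ∀ K : Set (Fin d → ℝ), IsCompact K → ∀ n : ℕ, ∀ b : ℝ,
    ∃ C > (0 : ℝ), ∃ ε₀ > (0 : ℝ), ∀ ε ∈ Set.Ioo (0 : ℝ) 1, ε < ε₀ →
      ∀ x ∈ K, ‖iteratedFDeriv ℝ n (u ε) x‖ ≤ C * ε ^ b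

namespace ColombeauInv

open Set

variable {d : ℕ}

/-- Order-0 negligibility for vector-valued nets. -/
def Neg0 {E : Type} [NormedAddCommGroup E] (u : ℝ → (Fin d → ℝ) → E) : Prop :=
  ∀ K : Set (Fin d → ℝ), IsCompact K → ∀ b : ℝ,
    ∃ C > (0 : ℝ), ∃ ε₀ > (0 : ℝ), ∀ ε ∈ Set.Ioo (0 : ℝ) 1, ε < ε₀ →
      ∀ x ∈ K, ‖u ε x‖ ≤ C * ε ^ b

/-- Moderateness for vector-valued nets. -/
def ModE {E : Type} [NormedAddCommGroup E] [NormedSpace ℝ E]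
    (u : ℝ → (Fin d → ℝ) → E) : Prop :=
  ∀ K : Set (Fin d → ℝ), IsCompact K → ∀ n : ℕ,
    ∃ b : ℝ, ∃ C > (0 : ℝ), ∃ ε₀ > (0 : ℝ), ∀ ε ∈ Set.Ioo (0 : ℝ) 1, ε < ε₀ →
      ∀ x ∈ K, ‖iteratedFDeriv ℝ n (u ε) x‖ ≤ C * ε ^ b

lemma modE_upto {E : Type} [NormedAddCommGroup E] [NormedSpace ℝ E]
    {u : ℝ → (Fin d → ℝ) → E} (hmod : ModE u) (K : Set (Fin d → ℝ))
    (hK : IsCompact K) (n : ℕ) :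
    ∃ b : ℝ, ∃ C > (0:ℝ), ∃ ε₀ > (0:ℝ), ∀ ε ∈ Set.Ioo (0:ℝ) 1, ε < ε₀ →
      ∀ i ≤ n, ∀ x ∈ K, ‖iteratedFDeriv ℝ i (u ε) x‖ ≤ C * ε ^ b := by
  induction n with
  | zero =>
    obtain ⟨b, C, hC, ε₀, hε₀, h⟩ := hmod K hK 0
    refine ⟨b, C, hC, ε₀, hε₀, fun ε hε hε' i hi x hx => ?_⟩
    obtain rfl : i = 0 := Nat.le_zero.mp hi
    exact h ε hε hε' x hx
  | succ n ih =>
    obtain ⟨b₁, C₁, hC₁, ε₁, hε₁, h₁⟩ := ih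
    obtain ⟨b₂, C₂, hC₂, ε₂, hε₂, h₂⟩ := hmod K hK (n+1)
    refine ⟨min b₁ b₂, C₁ + C₂, by positivity, min ε₁ ε₂, by positivity,
      fun ε hε hε' i hi x hx => ?_⟩
    have hεb : ∀ b' : ℝ, min b₁ b₂ ≤ b' → ε ^ b' ≤ ε ^ (min b₁ b₂) :=
      fun b' hb' => Real.rpow_le_rpow_of_exponent_ge hε.1 hε.2.le hb'
    have hpos : (0:ℝ) < ε ^ (min b₁ b₂) := Real.rpow_pos_of_pos hε.1 _
    rcases Nat.le_add_one_iff.mp hi with h' | rfl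
    · refine le_trans (h₁ ε hε (lt_of_lt_of_le hε' (min_le_left _ _)) i h' x hx) ?_
      exact mul_le_mul (by linarith) (hεb b₁ (min_le_left _ _))
        (Real.rpow_pos_of_pos hε.1 _).le (by linarith)
    · refine le_trans (h₂ ε hε (lt_of_lt_of_le hε' (min_le_right _ _)) x hx) ?_
      exact mul_le_mul (by linarith) (hεb b₂ (min_le_right _ _))
        (Real.rpow_pos_of_pos hε.1 _).le (by linarith)

lemma bound_upto {X F : Type*} [NormedAddCommGroup X] [NormedSpace ℝ X]
    [NormedAddCommGroup F] [NormedSpace ℝ F]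
    {G : X → F} (hG : ContDiff ℝ (⊤ : ℕ∞) G) {S : Set X} (hS : IsCompact S) (n : ℕ) :
    ∃ M : ℝ, 0 ≤ M ∧ ∀ j ≤ n, ∀ p ∈ S, ‖iteratedFDeriv ℝ j G p‖ ≤ M := by
  induction n with
  | zero =>
    obtain ⟨M, hM⟩ := hS.exists_bound_of_continuousOn
      ((hG.continuous_iteratedFDeriv (m := 0) (by simp)).continuousOn)
    refine ⟨max M 0, le_max_right _ _, fun j hj p hp => ?_⟩
    obtain rfl : j = 0 := Nat.le_zero.mp hj
    exact (hM p hp).trans (le_max_left _ _)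
  | succ n ih =>
    obtain ⟨M₁, hM₁0, h₁⟩ := ih
    obtain ⟨M₂, hM₂⟩ := hS.exists_bound_of_continuousOn
      ((hG.continuous_iteratedFDeriv (m := n+1) (by exact_mod_cast le_top)).continuousOn)
    refine ⟨max M₁ (max M₂ 0), le_trans hM₁0 (le_max_left _ _), fun j hj p hp => ?_⟩
    rcases Nat.le_add_one_iff.mp hj with h' | rfl
    · exact (h₁ j h' p hp).trans (le_max_left _ _)
    · exact (hM₂ p hp).trans (le_trans (le_max_left _ _) (le_max_right _ _))

/-- Bound on iterated derivatives of a partial map `y ↦ G (θ, y)`. -/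
lemma norm_iteratedFDeriv_slice_le {F : Type*} [NormedAddCommGroup F] [NormedSpace ℝ F]
    (G : ℝ × (Fin d → ℝ) → F) (hG : ContDiff ℝ (⊤ : ℕ∞) G) (θ : ℝ) (x : Fin d → ℝ)
    {n : ℕ} {M : ℝ} (hM : ∀ j ≤ n, ‖iteratedFDeriv ℝ j G (θ, x)‖ ≤ M)
    {i : ℕ} (hi : i ≤ n) :
    ‖iteratedFDeriv ℝ i (fun y => G (θ, y)) x‖ ≤ (n.factorial : ℝ) * M := by
  have hM0 : 0 ≤ M := le_trans (norm_nonneg _) (hM 0 (Nat.zero_le _))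
  set A : (Fin d → ℝ) →L[ℝ] ℝ × (Fin d → ℝ) :=
    (0 : (Fin d → ℝ) →L[ℝ] ℝ).prod (ContinuousLinearMap.id ℝ (Fin d → ℝ)) with hA
  have hAle : ‖A‖ ≤ 1 := by
    refine ContinuousLinearMap.opNorm_le_bound _ zero_le_one fun y => ?_
    have hAy : A y = ((0 : ℝ), y) := rfl
    rw [hAy, Prod.norm_def]
    simp only [norm_zero, one_mul]
    exact max_le (norm_nonneg y) le_rfl
  have hι : ∀ j, 1 ≤ j → ‖iteratedFDeriv ℝ j (fun y => ((θ, y) : ℝ × (Fin d → ℝ))) x‖ ≤ 1 := by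
    intro j hj
    have hfun : (fun y => ((θ, y) : ℝ × (Fin d → ℝ)))
        = (fun _ => ((θ, 0) : ℝ × (Fin d → ℝ))) + ⇑A := by
      funext y
      simp [hA, Prod.ext_iff]
    match j, hj with
    | 1, _ =>
      rw [hfun, iteratedFDeriv_add_apply contDiff_const.contDiffAt A.contDiff.contDiffAt, iteratedFDeriv_succ_const]
      simp only [Pi.zero_apply, zero_add]
      rw [← norm_iteratedFDeriv_fderiv, norm_iteratedFDeriv_zero, A.fderiv]
      exact hAle
    | (k+2), _ =>
      rw [hfun, iteratedFDeriv_add_apply contDiff_const.contDiffAt A.contDiff.contDiffAt, iteratedFDeriv_succ_const]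
      simp only [Pi.zero_apply, zero_add]
      have hfd : fderiv ℝ ⇑A = fun _ => A := funext fun y => A.fderiv
      rw [← norm_iteratedFDeriv_fderiv, hfd, iteratedFDeriv_succ_const]
      simp
  have hcomp : (fun y => G (θ, y)) = G ∘ (fun y => ((θ, y) : ℝ × (Fin d → ℝ))) := rfl
  rw [hcomp]
  have hbound := norm_iteratedFDeriv_comp_le (n := i) hG
    ((contDiff_const.prodMk contDiff_id :
      ContDiff ℝ (⊤ : ℕ∞) (fun y => ((θ, y) : ℝ × (Fin d → ℝ))))) (by exact_mod_cast le_top) x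
    (C := M) (D := 1)
    (fun j hj => hM j (le_trans hj hi))
    (fun j hj _ => by rw [one_pow]; exact hι j hj)
  rw [one_pow, mul_one] at hbound
  refine hbound.trans ?_
  exact mul_le_mul_of_nonneg_right (by exact_mod_cast Nat.factorial_le hi) hM0

lemma neg0_fderiv {E : Type} [NormedAddCommGroup E] [NormedSpace ℝ E]
    {u : ℝ → (Fin d → ℝ) → E}
    (hsm : ∀ ε ∈ Set.Ioo (0:ℝ) 1, ContDiff ℝ (⊤ : ℕ∞) (u ε))
    (hmod : ModE u) (hneg : Neg0 u) :
    Neg0 (fun ε x => fderiv ℝ (u ε) x) := by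
  intro K hK b
  obtain ⟨R₀, hR₀⟩ := hK.isBounded.subset_closedBall 0
  set R : ℝ := max R₀ 0 with hRdef
  have hKR : K ⊆ Metric.closedBall 0 R :=
    hR₀.trans (Metric.closedBall_subset_closedBall (le_max_left _ _))
  set K' := Metric.closedBall (0 : Fin d → ℝ) (R + 1) with hK'def
  have hK' : IsCompact K' := isCompact_closedBall _ _
  obtain ⟨b₂, C₂, hC₂, ε₂, hε₂, h₂⟩ := hmod K' hK' 2
  set a : ℝ := max (2*b - b₂) b₂ with hadef
  have hab₂ : b₂ ≤ a := le_max_right _ _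
  have hab : 2*b - b₂ ≤ a := le_max_left _ _
  obtain ⟨C₁, hC₁, ε₁, hε₁, h₁⟩ := hneg K' hK' a
  refine ⟨2*C₁ + C₂, by positivity, min ε₁ ε₂, by positivity, fun ε hε hε' x hx => ?_⟩
  have hε0 : (0:ℝ) < ε := hε.1
  have hε1 : ε < 1 := hε.2
  have hcd : ContDiff ℝ (⊤ : ℕ∞) (u ε) := hsm ε hε
  set t : ℝ := ε ^ ((a - b₂)/2) with htdef
  have ht0 : 0 < t := Real.rpow_pos_of_pos hε0 _
  have ht1 : t ≤ 1 := Real.rpow_le_one hε0.le hε1.le (by linarith)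
  have hsub : Metric.closedBall x 1 ⊆ K' := by
    intro z hz
    have hx0 : dist x 0 ≤ R := hKR hx
    have hzx : dist z x ≤ 1 := hz
    simp only [hK'def, Metric.mem_closedBall]
    calc dist z 0 ≤ dist z x + dist x 0 := dist_triangle _ _ _
      _ ≤ R + 1 := by linarith
  have hxK' : x ∈ K' := hsub (Metric.mem_closedBall_self zero_le_one)
  -- second derivative bound on K'
  have hM₂ : ∀ z ∈ K', ‖fderiv ℝ (fderiv ℝ (u ε)) z‖ ≤ C₂ * ε ^ b₂ := by
    intro z hz
    have a1 : ‖iteratedFDeriv ℝ 0 (fderiv ℝ (fderiv ℝ (u ε))) z‖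
        = ‖iteratedFDeriv ℝ 1 (fderiv ℝ (u ε)) z‖ := norm_iteratedFDeriv_fderiv
    have a2 : ‖iteratedFDeriv ℝ 1 (fderiv ℝ (u ε)) z‖
        = ‖iteratedFDeriv ℝ 2 (u ε) z‖ := norm_iteratedFDeriv_fderiv
    have a0 : ‖iteratedFDeriv ℝ 0 (fderiv ℝ (fderiv ℝ (u ε))) z‖
        = ‖fderiv ℝ (fderiv ℝ (u ε)) z‖ := norm_iteratedFDeriv_zero
    have e1 := (a1.trans a2)
    rw [a0] at e1
    rw [e1]
    exact h₂ ε hε (lt_of_lt_of_le hε' (min_le_right _ _)) z hz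
  have hdiff1 : ∀ z, DifferentiableAt ℝ (u ε) z :=
    fun z => (hcd.differentiable (by simp)).differentiableAt
  have hcd1 : ContDiff ℝ (⊤ : ℕ∞) (fderiv ℝ (u ε)) := hcd.fderiv_right (by simp)
  have hdiff2 : ∀ z, DifferentiableAt ℝ (fderiv ℝ (u ε)) z :=
    fun z => (hcd1.differentiable (by simp)).differentiableAt
  have hlip : ∀ z ∈ Metric.closedBall x t,
      ‖fderiv ℝ (u ε) z - fderiv ℝ (u ε) x‖ ≤ (C₂ * ε ^ b₂) * t := by
    intro z hz
    have hz1 : z ∈ Metric.closedBall x 1 := Metric.closedBall_subset_closedBall ht1 hz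
    have hx1 : x ∈ Metric.closedBall x 1 := Metric.mem_closedBall_self zero_le_one
    have hmvt := Convex.norm_image_sub_le_of_norm_fderiv_le (f := fderiv ℝ (u ε))
      (fun w _ => hdiff2 w) (fun w hw => hM₂ w (hsub hw)) (convex_closedBall x 1) hx1 hz1
    refine hmvt.trans ?_
    have hzxt : ‖z - x‖ ≤ t := by rw [← dist_eq_norm]; exact hz
    exact mul_le_mul_of_nonneg_left hzxt (by positivity)
  -- rpow arithmetic
  set P : ℝ := ε ^ ((a + b₂)/2) with hPdef
  have hP0 : 0 < P := Real.rpow_pos_of_pos hε0 _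
  have he1 : ε ^ b₂ * t = P := by
    rw [htdef, hPdef, ← Real.rpow_add hε0]
    congr 1; ring
  have he2 : ε ^ a = P * t := by
    rw [htdef, hPdef, ← Real.rpow_add hε0]
    congr 1; ring
  have he3 : P ≤ ε ^ b :=
    Real.rpow_le_rpow_of_exponent_ge hε0 hε1.le (by linarith)
  -- main bound on directional values
  have hbound : ∀ v : Fin d → ℝ,
      ‖fderiv ℝ (u ε) x v‖ ≤ ((2*C₁ + C₂) * ε ^ b) * ‖v‖ := by
    intro v
    rcases eq_or_ne v 0 with rfl | hv
    · simp
    · have hv0 : 0 < ‖v‖ := norm_pos_iff.mpr hv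
      set w : Fin d → ℝ := (t / ‖v‖) • v with hwdef
      have hw : ‖w‖ = t := by
        rw [hwdef, norm_smul, Real.norm_eq_abs, abs_of_pos (div_pos ht0 hv0)]
        field_simp
      have hyball : x + w ∈ Metric.closedBall x t := by
        rw [Metric.mem_closedBall, dist_eq_norm, add_sub_cancel_left, hw]
      have hxball : x ∈ Metric.closedBall x t := Metric.mem_closedBall_self ht0.le
      have happrox := Convex.norm_image_sub_le_of_norm_fderiv_le' (f := u ε)
        (φ := fderiv ℝ (u ε) x) (fun z _ => hdiff1 z) hlip
        (convex_closedBall x t) hxball hyball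
      rw [add_sub_cancel_left, hw] at happrox
      -- ‖u (x+w) - u x - φ w‖ ≤ C₂ ε^b₂ t * t
      have hyK' : x + w ∈ K' := hsub (Metric.closedBall_subset_closedBall ht1 hyball)
      have hn1 : ‖u ε x‖ ≤ C₁ * ε ^ a :=
        h₁ ε hε (lt_of_lt_of_le hε' (min_le_left _ _)) x hxK'
      have hn2 : ‖u ε (x+w)‖ ≤ C₁ * ε ^ a :=
        h₁ ε hε (lt_of_lt_of_le hε' (min_le_left _ _)) (x+w) hyK'
      have hsplit : fderiv ℝ (u ε) x w
          = (u ε (x+w) - u ε x) - (u ε (x+w) - u ε x - fderiv ℝ (u ε) x w) := by abel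
      have hφw : ‖fderiv ℝ (u ε) x w‖ ≤ C₂ * ε ^ b₂ * t * t + 2*(C₁ * ε ^ a) := by
        have h3 : ‖u ε (x + w) - u ε x‖ ≤ ‖u ε (x+w)‖ + ‖u ε x‖ := norm_sub_le _ _
        calc ‖fderiv ℝ (u ε) x w‖
            = ‖(u ε (x+w) - u ε x) - (u ε (x+w) - u ε x - fderiv ℝ (u ε) x w)‖ := by
              rw [← hsplit]
          _ ≤ ‖u ε (x+w) - u ε x‖ + ‖u ε (x+w) - u ε x - fderiv ℝ (u ε) x w‖ :=
              norm_sub_le _ _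
          _ ≤ C₂ * ε ^ b₂ * t * t + 2*(C₁ * ε ^ a) := by linarith
      have hsmul : fderiv ℝ (u ε) x w = (t / ‖v‖) • (fderiv ℝ (u ε) x v) := by
        rw [hwdef, map_smul]
      have hφweq : t * ‖fderiv ℝ (u ε) x v‖ = ‖v‖ * ‖fderiv ℝ (u ε) x w‖ := by
        rw [hsmul, norm_smul, Real.norm_eq_abs, abs_of_pos (div_pos ht0 hv0)]
        field_simp
      have hkey : ‖v‖ * ‖fderiv ℝ (u ε) x w‖ ≤ ‖v‖ * ((C₂ + 2*C₁) * (P * t)) := by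
        refine mul_le_mul_of_nonneg_left ?_ (norm_nonneg v)
        refine hφw.trans (le_of_eq ?_)
        rw [he2]
        linear_combination (C₂ * t) * he1
      have hfin : t * ‖fderiv ℝ (u ε) x v‖ ≤ t * ((2*C₁ + C₂) * ε ^ b * ‖v‖) := by
        calc t * ‖fderiv ℝ (u ε) x v‖ = ‖v‖ * ‖fderiv ℝ (u ε) x w‖ := hφweq
          _ ≤ ‖v‖ * ((C₂ + 2*C₁) * (P * t)) := hkey
          _ ≤ ‖v‖ * ((C₂ + 2*C₁) * (ε ^ b * t)) := by
              refine mul_le_mul_of_nonneg_left (mul_le_mul_of_nonneg_left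
                (mul_le_mul_of_nonneg_right he3 ht0.le) (by linarith)) (norm_nonneg v)
          _ = t * ((2*C₁ + C₂) * ε ^ b * ‖v‖) := by ring
      exact le_of_mul_le_mul_left hfin ht0
  show ‖fderiv ℝ (u ε) x‖ ≤ (2*C₁ + C₂) * ε ^ b
  exact ContinuousLinearMap.opNorm_le_bound _ (by positivity) hbound

lemma negn_of_neg0 (n : ℕ) :
    ∀ (E : Type) [NormedAddCommGroup E] [NormedSpace ℝ E] (u : ℝ → (Fin d → ℝ) → E),
      (∀ ε ∈ Set.Ioo (0:ℝ) 1, ContDiff ℝ (⊤ : ℕ∞) (u ε)) → ModE u → Neg0 u →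
      ∀ K : Set (Fin d → ℝ), IsCompact K → ∀ b : ℝ,
        ∃ C > (0:ℝ), ∃ ε₀ > (0:ℝ), ∀ ε ∈ Set.Ioo (0:ℝ) 1, ε < ε₀ →
          ∀ x ∈ K, ‖iteratedFDeriv ℝ n (u ε) x‖ ≤ C * ε ^ b := by
  induction n with
  | zero =>
    intro E _ _ u hsm hmod hneg K hK b
    obtain ⟨C, hC, ε₀, hε₀, h⟩ := hneg K hK b
    exact ⟨C, hC, ε₀, hε₀, fun ε hε hε' x hx => by
      rw [norm_iteratedFDeriv_zero]; exact h ε hε hε' x hx⟩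
  | succ n ih =>
    intro E _ _ u hsm hmod hneg K hK b
    have hsm' : ∀ ε ∈ Set.Ioo (0:ℝ) 1, ContDiff ℝ (⊤ : ℕ∞) (fun x => fderiv ℝ (u ε) x) :=
      fun ε hε => (hsm ε hε).fderiv_right (by simp)
    have hmod' : ModE (fun ε x => fderiv ℝ (u ε) x) := by
      intro K₀ hK₀ m
      obtain ⟨b', C, hC, ε₀, hε₀, h⟩ := hmod K₀ hK₀ (m+1)
      exact ⟨b', C, hC, ε₀, hε₀, fun ε hε hε' x hx => by
        show ‖iteratedFDeriv ℝ m (fderiv ℝ (u ε)) x‖ ≤ C * ε ^ b'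
        rw [norm_iteratedFDeriv_fderiv]
        exact h ε hε hε' x hx⟩
    have hneg' : Neg0 (fun ε x => fderiv ℝ (u ε) x) := neg0_fderiv hsm hmod hneg
    obtain ⟨C, hC, ε₀, hε₀, h⟩ :=
      ih ((Fin d → ℝ) →L[ℝ] E) (fun ε x => fderiv ℝ (u ε) x) hsm' hmod' hneg' K hK b
    refine ⟨C, hC, ε₀, hε₀, fun ε hε hε' x hx => ?_⟩
    rw [← norm_iteratedFDeriv_fderiv]
    exact h ε hε hε' x hx


end ColombeauInv

/-- A Colombeau generalized function invariant under all classical elements of a smooth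
one-parameter group is invariant under the group elements with generalized (bounded)
parameter. -/
theorem invariance_one_parameter_group {d : ℕ}
    (g : ℝ → (Fin d → ℝ) → (Fin d → ℝ))
    (hg_smooth : ContDiff ℝ (⊤ : ℕ∞) (Function.uncurry g))
    (hg_id : g 0 = id)
    (hg_group : ∀ θ₁ θ₂ : ℝ, ∀ x : Fin d → ℝ, g (θ₁ + θ₂) x = g θ₁ (g θ₂ x))
    (f : ℝ → (Fin d → ℝ) → ℂ)
    (hf_smooth : ∀ ε ∈ Set.Ioo (0 : ℝ) 1, ContDiff ℝ (⊤ : ℕ∞) (f ε))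
    (hf_mod : Moderate f)
    (hf_inv : ∀ θ : ℝ, Negligible (fun ε x => f ε (g θ x) - f ε x)) :
    ∀ θ : ℝ → ℝ, (∃ C > (0 : ℝ), ∀ ε ∈ Set.Ioo (0 : ℝ) 1, |θ ε| ≤ C) →
      Negligible (fun ε x => f ε (g (θ ε) x) - f ε x) := by
  intro θ hθ
  obtain ⟨Cθ, hCθ, hθb⟩ := hθ
  have hgc : Continuous (Function.uncurry g) := hg_smooth.continuous
  have hslice : ∀ τ : ℝ, ContDiff ℝ (⊤ : ℕ∞) (g τ) :=
    fun τ => hg_smooth.comp (contDiff_const.prodMk contDiff_id)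
  -- smoothness of the net
  have hvsm : ∀ ε ∈ Set.Ioo (0:ℝ) 1, ContDiff ℝ (⊤ : ℕ∞) (fun x => f ε (g (θ ε) x) - f ε x) :=
    fun ε hε => ((hf_smooth ε hε).comp (hslice (θ ε))).sub (hf_smooth ε hε)
  -- moderateness of the net
  have hvmod : ColombeauInv.ModE (fun ε x => f ε (g (θ ε) x) - f ε x) := by
    intro K hK n
    have hS : IsCompact (Set.Icc (-Cθ) Cθ ×ˢ K) := isCompact_Icc.prod hK
    set K₁ := Function.uncurry g '' (Set.Icc (-Cθ) Cθ ×ˢ K) with hK₁def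
    have hK₁c : IsCompact K₁ := hS.image hgc
    obtain ⟨M, hM0, hMb⟩ := ColombeauInv.bound_upto hg_smooth hS n
    set D : ℝ := max 1 ((n.factorial : ℝ) * M) with hDdef
    have hD1 : (1:ℝ) ≤ D := le_max_left _ _
    obtain ⟨bf, Cf, hCf, εf, hεf, hf₁⟩ :=
      ColombeauInv.modE_upto (fun K hK m => hf_mod K hK m) K₁ hK₁c n
    obtain ⟨bg, Cg, hCg, εg, hεg, hf₂⟩ := hf_mod K hK n
    refine ⟨min bf bg, (n.factorial : ℝ) * Cf * D^n + Cg, by positivity,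
      min εf εg, by positivity, fun ε hε hε' x hx => ?_⟩
    have hθmem : (θ ε, x) ∈ Set.Icc (-Cθ) Cθ ×ˢ K :=
      ⟨Set.mem_Icc.mpr (abs_le.mp (hθb ε hε)), hx⟩
    have hpt : g (θ ε) x ∈ K₁ := ⟨(θ ε, x), hθmem, rfl⟩
    have hfe : ContDiff ℝ (⊤ : ℕ∞) (f ε) := hf_smooth ε hε
    have hcompsm : ContDiff ℝ (⊤ : ℕ∞) (f ε ∘ g (θ ε)) := hfe.comp (hslice (θ ε))
    have hsplit : iteratedFDeriv ℝ n (fun x => f ε (g (θ ε) x) - f ε x) x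
        = iteratedFDeriv ℝ n (f ε ∘ g (θ ε)) x - iteratedFDeriv ℝ n (f ε) x := by
      have h0 : (fun x => f ε (g (θ ε) x) - f ε x) = (f ε ∘ g (θ ε)) + (-f ε) := by
        funext y; simp [Function.comp, sub_eq_add_neg]
      have hcompc : ContDiff ℝ n (f ε ∘ g (θ ε)) := hcompsm.of_le (by exact_mod_cast le_top)
      have hnegc : ContDiff ℝ n (-f ε) := (hfe.of_le (by exact_mod_cast le_top)).neg
      rw [h0, iteratedFDeriv_add_apply hcompc.contDiffAt hnegc.contDiffAt,
        iteratedFDeriv_neg_apply, ← sub_eq_add_neg]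
    have hC1 : ∀ i ≤ n, ‖iteratedFDeriv ℝ i (f ε) (g (θ ε) x)‖ ≤ Cf * ε ^ bf :=
      fun i hi => hf₁ ε hε (lt_of_lt_of_le hε' (min_le_left _ _)) i hi _ hpt
    have hD1' : ∀ i, 1 ≤ i → i ≤ n → ‖iteratedFDeriv ℝ i (g (θ ε)) x‖ ≤ D ^ i := by
      intro i h1i hin
      have hb := ColombeauInv.norm_iteratedFDeriv_slice_le (Function.uncurry g) hg_smooth
        (θ ε) x (fun j hj => hMb j hj (θ ε, x) hθmem) hin
      calc ‖iteratedFDeriv ℝ i (g (θ ε)) x‖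
          = ‖iteratedFDeriv ℝ i (fun y => Function.uncurry g (θ ε, y)) x‖ := rfl
        _ ≤ (n.factorial : ℝ) * M := hb
        _ ≤ D := le_max_right _ _
        _ ≤ D ^ i := le_self_pow₀ hD1 (Nat.one_le_iff_ne_zero.mp h1i)
    have hcomp := norm_iteratedFDeriv_comp_le (n := n) hfe (hslice (θ ε)) (by exact_mod_cast le_top) x
      (C := Cf * ε ^ bf) (D := D) hC1 hD1'
    have hf2b : ‖iteratedFDeriv ℝ n (f ε) x‖ ≤ Cg * ε ^ bg :=
      hf₂ ε hε (lt_of_lt_of_le hε' (min_le_right _ _)) x hx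
    have hmono : ∀ b' : ℝ, min bf bg ≤ b' → ε ^ b' ≤ ε ^ (min bf bg) :=
      fun b' hb' => Real.rpow_le_rpow_of_exponent_ge hε.1 hε.2.le hb'
    show ‖iteratedFDeriv ℝ n (fun x => f ε (g (θ ε) x) - f ε x) x‖
        ≤ ((n.factorial : ℝ) * Cf * D^n + Cg) * ε ^ (min bf bg)
    rw [hsplit]
    calc ‖iteratedFDeriv ℝ n (f ε ∘ g (θ ε)) x - iteratedFDeriv ℝ n (f ε) x‖
        ≤ ‖iteratedFDeriv ℝ n (f ε ∘ g (θ ε)) x‖ + ‖iteratedFDeriv ℝ n (f ε) x‖ :=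
          norm_sub_le _ _
      _ ≤ (n.factorial : ℝ) * (Cf * ε ^ bf) * D^n + Cg * ε ^ bg := by linarith
      _ ≤ ((n.factorial : ℝ) * Cf * D^n) * ε ^ (min bf bg) + Cg * ε ^ (min bf bg) := by
          have e1 : (n.factorial : ℝ) * (Cf * ε ^ bf) * D^n
              = ((n.factorial : ℝ) * Cf * D^n) * ε ^ bf := by ring
          rw [e1]
          have hp1 : (0:ℝ) ≤ (n.factorial : ℝ) * Cf * D^n := by positivity
          have hp2 : (0:ℝ) ≤ Cg := hCg.le
          exact add_le_add (mul_le_mul_of_nonneg_left (hmono bf (min_le_left _ _)) hp1)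
            (mul_le_mul_of_nonneg_left (hmono bg (min_le_right _ _)) hp2)
      _ = ((n.factorial : ℝ) * Cf * D^n + Cg) * ε ^ (min bf bg) := by ring
  -- order-0 negligibility of the net, via Baire category
  have hvneg : ColombeauInv.Neg0 (fun ε x => f ε (g (θ ε) x) - f ε x) := by
    intro K hK b
    set K₁ := Function.uncurry g '' (Set.Icc (-Cθ) Cθ ×ˢ K) with hK₁def
    have hK₁c : IsCompact K₁ := (isCompact_Icc.prod hK).image hgc
    set KR : ℕ → Set (Fin d → ℝ) :=
      fun R => Function.uncurry g '' (Set.Icc (-(R:ℝ)) R ×ˢ K₁) with hKRdef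
    have hKRc : ∀ R, IsCompact (KR R) := fun R => (isCompact_Icc.prod hK₁c).image hgc
    set F : ℕ × ℕ × ℕ → Set ℝ := fun p =>
      {τ : ℝ | τ ∈ Set.Icc (-(p.2.2:ℝ)) (p.2.2:ℝ) ∧ ∀ ε ∈ Set.Ioo (0:ℝ) 1,
        ε < 1/((p.2.1:ℝ)+1) → ∀ y ∈ KR p.2.2,
          ‖f ε (g τ y) - f ε y‖ ≤ ((p.1:ℝ)+1) * ε ^ b} with hFdef
    have hFclosed : ∀ p, IsClosed (F p) := by
      intro p
      have hrw : F p = (Set.Icc (-(p.2.2:ℝ)) (p.2.2:ℝ)) ∩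
          (⋂ (ε : ℝ) (_ : ε ∈ Set.Ioo (0:ℝ) 1 ∧ ε < 1/((p.2.1:ℝ)+1))
            (y : Fin d → ℝ) (_ : y ∈ KR p.2.2),
            {τ : ℝ | ‖f ε (g τ y) - f ε y‖ ≤ ((p.1:ℝ)+1) * ε ^ b}) := by
        ext τ
        simp only [hFdef, Set.mem_setOf_eq, Set.mem_inter_iff, Set.mem_iInter]
        constructor
        · rintro ⟨h1, h2⟩
          exact ⟨h1, fun ε hε y hy => h2 ε hε.1 hε.2 y hy⟩
        · rintro ⟨h1, h2⟩
          exact ⟨h1, fun ε hε hε' y hy => h2 ε ⟨hε, hε'⟩ y hy⟩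
      rw [hrw]
      refine isClosed_Icc.inter (isClosed_iInter fun ε => isClosed_iInter fun hε =>
        isClosed_iInter fun y => isClosed_iInter fun _ => ?_)
      have hcont : Continuous fun τ : ℝ => ‖f ε (g τ y) - f ε y‖ := by
        have h1 : Continuous fun τ : ℝ => Function.uncurry g (τ, y) :=
          hgc.comp (continuous_id.prodMk continuous_const)
        exact (((hf_smooth ε hε.1).continuous.comp h1).sub continuous_const).norm
      exact isClosed_le hcont continuous_const
    have hFcover : ⋃ p, F p = Set.univ := by
      ext τ
      simp only [Set.mem_iUnion, Set.mem_univ, iff_true]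
      have hτR : |τ| ≤ ((⌈|τ|⌉₊ : ℕ) : ℝ) := Nat.le_ceil _
      obtain ⟨C', hC', ε₀, hε₀, h⟩ := hf_inv τ (KR ⌈|τ|⌉₊) (hKRc _) 0 b
      refine ⟨(⌈C'⌉₊, ⌈1/ε₀⌉₊, ⌈|τ|⌉₊), ?_, ?_⟩
      · rw [Set.mem_Icc]
        obtain ⟨ha1, ha2⟩ := abs_le.mp hτR
        exact ⟨ha1, ha2⟩
      · intro ε hε hε' y hy
        have hεε₀ : ε < ε₀ := by
          have h1 : (1:ℝ)/ε₀ ≤ ((⌈1/ε₀⌉₊:ℕ):ℝ) := Nat.le_ceil _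
          have h2 : (1:ℝ)/(((⌈1/ε₀⌉₊:ℕ):ℝ)+1) < ε₀ := by
            rw [div_lt_iff₀ (by positivity)]
            have h3 : 1/ε₀ < ((⌈1/ε₀⌉₊:ℕ):ℝ) + 1 := lt_of_le_of_lt h1 (by linarith)
            calc (1:ℝ) = ε₀ * (1/ε₀) := by field_simp
              _ < ε₀ * (((⌈1/ε₀⌉₊:ℕ):ℝ) + 1) := by
                  exact mul_lt_mul_of_pos_left h3 hε₀
          exact lt_trans hε' h2
        have hb0 := h ε hε hεε₀ y hy
        rw [norm_iteratedFDeriv_zero] at hb0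
        refine hb0.trans (mul_le_mul_of_nonneg_right ?_
          (Real.rpow_pos_of_pos hε.1 b).le)
        calc C' ≤ ((⌈C'⌉₊:ℕ):ℝ) := Nat.le_ceil _
          _ ≤ ((⌈C'⌉₊:ℕ):ℝ) + 1 := by linarith
    obtain ⟨p, hpint⟩ := nonempty_interior_of_iUnion_of_closed hFclosed hFcover
    obtain ⟨θ₀, hθ₀⟩ := hpint
    obtain ⟨δ, hδ0, hball⟩ := Metric.mem_nhds_iff.mp (mem_interior_iff_mem_nhds.mp hθ₀)
    have hθ₀F : θ₀ ∈ F p := interior_subset hθ₀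
    have hstep : ∀ s : ℝ, |s| ≤ δ/2 → ∀ ε ∈ Set.Ioo (0:ℝ) 1, ε < 1/((p.2.1:ℝ)+1) →
        ∀ y ∈ K₁, ‖f ε (g s y) - f ε y‖ ≤ 2*(((p.1:ℝ)+1) * ε ^ b) := by
      intro s hs ε hε hε' y hy
      have hmem : θ₀ + s ∈ F p := by
        apply hball
        rw [Metric.mem_ball]
        have hd : dist (θ₀ + s) θ₀ = |s| := by
          rw [Real.dist_eq]; congr 1; ring
        rw [hd]; linarith
      have hzKR : g (-θ₀) y ∈ KR p.2.2 := by
        obtain ⟨ha1, ha2⟩ := hθ₀F.1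
        have hmem' : -θ₀ ∈ Set.Icc (-(p.2.2:ℝ)) (p.2.2:ℝ) :=
          Set.mem_Icc.mpr ⟨by linarith, by linarith⟩
        exact ⟨(-θ₀, y), ⟨hmem', hy⟩, rfl⟩
      have e1 : g s y = g (θ₀ + s) (g (-θ₀) y) := by
        rw [← hg_group (θ₀+s) (-θ₀) y]
        congr 1; ring
      have e2 : y = g θ₀ (g (-θ₀) y) := by
        rw [← hg_group θ₀ (-θ₀) y]
        have h0 : θ₀ + -θ₀ = 0 := by ring
        rw [h0, hg_id]; rfl
      have e3 : f ε (g s y) - f ε y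
          = (f ε (g (θ₀+s) (g (-θ₀) y)) - f ε (g (-θ₀) y))
            - (f ε (g θ₀ (g (-θ₀) y)) - f ε (g (-θ₀) y)) := by
        rw [sub_sub_sub_cancel_right, ← e1, ← e2]
      rw [e3]
      have hb1 := hmem.2 ε hε hε' (g (-θ₀) y) hzKR
      have hb2 := hθ₀F.2 ε hε hε' (g (-θ₀) y) hzKR
      calc ‖_ - _‖ ≤ ‖f ε (g (θ₀+s) (g (-θ₀) y)) - f ε (g (-θ₀) y)‖
            + ‖f ε (g θ₀ (g (-θ₀) y)) - f ε (g (-θ₀) y)‖ := norm_sub_le _ _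
        _ ≤ 2*(((p.1:ℝ)+1) * ε ^ b) := by linarith
    set N : ℕ := max 1 ⌈(2*Cθ)/δ⌉₊ with hNdef
    have hN1 : 1 ≤ N := le_max_left _ _
    have hN0 : (0:ℝ) < N := by
      have : (1:ℝ) ≤ (N:ℝ) := by exact_mod_cast hN1
      linarith
    have hNδ : Cθ / N ≤ δ/2 := by
      have h1 : (2*Cθ)/δ ≤ (⌈(2*Cθ)/δ⌉₊:ℝ) := Nat.le_ceil _
      have h2 : ((⌈(2*Cθ)/δ⌉₊:ℕ):ℝ) ≤ (N:ℝ) := by exact_mod_cast le_max_right 1 _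
      have h3 : 2*Cθ ≤ N * δ := by
        have := (div_le_iff₀ hδ0).mp (h1.trans h2)
        linarith
      rw [div_le_div_iff₀ hN0 (by norm_num)]
      linarith
    refine ⟨2*N*((p.1:ℝ)+1), by positivity, 1/((p.2.1:ℝ)+1), by positivity,
      fun ε hε hε' x hx => ?_⟩
    set s : ℝ := θ ε / N with hsdef
    have habs_s : |s| = |θ ε| / N := by
      rw [hsdef, abs_div, abs_of_pos hN0]
    have hsb : |s| ≤ δ/2 := by
      rw [habs_s]
      calc |θ ε| / N ≤ Cθ / N := by
            gcongr
            exact hθb ε hε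
        _ ≤ δ/2 := hNδ
    have hyj : ∀ j : ℕ, j ≤ N → g ((j:ℝ) * s) x ∈ K₁ := by
      intro j hj
      refine ⟨((j:ℝ)*s, x), ⟨Set.mem_Icc.mpr ?_, hx⟩, rfl⟩
      have habs : |(j:ℝ)*s| ≤ Cθ := by
        rw [abs_mul, abs_of_nonneg (Nat.cast_nonneg j)]
        calc (j:ℝ) * |s| ≤ (N:ℝ) * |s| := by
              apply mul_le_mul_of_nonneg_right ?_ (abs_nonneg s)
              · exact_mod_cast hj
          _ = |θ ε| := by rw [habs_s]; field_simp
          _ ≤ Cθ := hθb ε hε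
      exact abs_le.mp habs
    have htel : ∀ k : ℕ, k ≤ N → f ε (g ((k:ℝ) * s) x) - f ε x =
        ∑ j ∈ Finset.range k,
          (f ε (g s (g ((j:ℝ) * s) x)) - f ε (g ((j:ℝ) * s) x)) := by
      intro k hk
      induction k with
      | zero => simp [hg_id]
      | succ k ihk =>
        have hk' : k ≤ N := le_trans (Nat.le_succ k) hk
        rw [Finset.sum_range_succ, ← ihk hk']
        have hcast : ((k+1:ℕ):ℝ) * s = s + (k:ℝ)*s := by push_cast; ring
        rw [hcast, hg_group]
        ring
    have hmain := htel N le_rfl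
    have hNs : (N:ℝ) * s = θ ε := by
      rw [hsdef]; field_simp
    rw [hNs] at hmain
    show ‖f ε (g (θ ε) x) - f ε x‖ ≤ 2*N*((p.1:ℝ)+1) * ε ^ b
    rw [hmain]
    calc ‖∑ j ∈ Finset.range N,
          (f ε (g s (g ((j:ℝ) * s) x)) - f ε (g ((j:ℝ) * s) x))‖
        ≤ ∑ j ∈ Finset.range N,
          ‖f ε (g s (g ((j:ℝ) * s) x)) - f ε (g ((j:ℝ) * s) x)‖ := norm_sum_le _ _
      _ ≤ ∑ _j ∈ Finset.range N, 2*(((p.1:ℝ)+1) * ε ^ b) := by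
          refine Finset.sum_le_sum fun j hj => ?_
          exact hstep s hsb ε hε hε' _ (hyj j (le_of_lt (Finset.mem_range.mp hj)))
      _ = N * (2*(((p.1:ℝ)+1) * ε ^ b)) := by
          rw [Finset.sum_const, Finset.card_range, nsmul_eq_mul]
      _ = 2*N*((p.1:ℝ)+1) * ε ^ b := by ring
  intro K hK n b
  exact ColombeauInv.negn_of_neg0 n ℂ _ hvsm hvmod hvneg K hK b
end

section
/- Fix 1 ≤ i < j ≤ d. Let (f_ε)_{ε∈(0,1)} be a moderate net of smooth functions ℝ^d → ℂ. Suppose that for every θ ∈ ℝ the net (x ↦ f_ε(R_{i,j,θ} x) − f_ε(x))_ε is negligible. Then for every bounded family (θ_ε)_{ε∈(0,1)} of real numbers, the net (x ↦ f_ε(R_{i,j,θ_ε} x) − f_ε(x))_ε is negligible. -/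
/-- The rotation by angle `θ` in the `(e_i, e_j)`-coordinate plane of `ℝ^d`. -/
noncomputable def planarRot {d : ℕ} (i j : Fin d) (θ : ℝ) (x : Fin d → ℝ) : Fin d → ℝ :=
  fun k =>
    if k = i then Real.cos θ * x i - Real.sin θ * x j
    else if k = j then Real.sin θ * x i + Real.cos θ * x j
    else x k

namespace PlanarAux

variable {d : ℕ}

noncomputable def rotL (i j : Fin d) (θ : ℝ) : (Fin d → ℝ) →ₗ[ℝ] (Fin d → ℝ) where
  toFun := planarRot i j θ
  map_add' x y := by
    funext k
    simp only [planarRot, Pi.add_apply]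
    split_ifs <;> ring
  map_smul' c x := by
    funext k
    simp only [planarRot, Pi.smul_apply, smul_eq_mul, RingHom.id_apply]
    split_ifs <;> ring

noncomputable def rotCLM (i j : Fin d) (θ : ℝ) : (Fin d → ℝ) →L[ℝ] (Fin d → ℝ) :=
  LinearMap.toContinuousLinearMap (rotL i j θ)

@[simp] theorem rotCLM_apply (i j : Fin d) (θ : ℝ) (x : Fin d → ℝ) :
    rotCLM i j θ x = planarRot i j θ x := rfl

theorem norm_planarRot_le (i j : Fin d) (θ : ℝ) (x : Fin d → ℝ) :
    ‖planarRot i j θ x‖ ≤ 2 * ‖x‖ := by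
  rw [pi_norm_le_iff_of_nonneg (by positivity)]
  intro k
  have hxi : ‖x i‖ ≤ ‖x‖ := norm_le_pi_norm x i
  have hxj : ‖x j‖ ≤ ‖x‖ := norm_le_pi_norm x j
  have hxk : ‖x k‖ ≤ ‖x‖ := norm_le_pi_norm x k
  have hc : |Real.cos θ| ≤ 1 := Real.abs_cos_le_one θ
  have hs : |Real.sin θ| ≤ 1 := Real.abs_sin_le_one θ
  simp only [planarRot, Real.norm_eq_abs] at *
  split_ifs
  · calc |Real.cos θ * x i - Real.sin θ * x j|
        ≤ |Real.cos θ * x i| + |Real.sin θ * x j| := abs_sub _ _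
      _ = |Real.cos θ| * |x i| + |Real.sin θ| * |x j| := by rw [abs_mul, abs_mul]
      _ ≤ 1 * ‖x‖ + 1 * ‖x‖ := by
          gcongr <;> first | exact hc | exact hs | exact hxi | exact hxj
      _ = 2 * ‖x‖ := by ring
  · calc |Real.sin θ * x i + Real.cos θ * x j|
        ≤ |Real.sin θ * x i| + |Real.cos θ * x j| := abs_add_le _ _
      _ = |Real.sin θ| * |x i| + |Real.cos θ| * |x j| := by rw [abs_mul, abs_mul]
      _ ≤ 1 * ‖x‖ + 1 * ‖x‖ := by
          gcongr <;> first | exact hc | exact hs | exact hxi | exact hxj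
      _ = 2 * ‖x‖ := by ring
  · nlinarith [norm_nonneg x]

theorem norm_rotCLM_le (i j : Fin d) (θ : ℝ) : ‖rotCLM i j θ‖ ≤ 2 :=
  ContinuousLinearMap.opNorm_le_bound _ (by norm_num) fun x => by
    simpa using norm_planarRot_le i j θ x

theorem planarRot_comp (i j : Fin d) (hij : i ≠ j) (θ φ : ℝ) (x : Fin d → ℝ) :
    planarRot i j θ (planarRot i j φ x) = planarRot i j (θ + φ) x := by
  funext k
  simp only [planarRot]
  rcases eq_or_ne k i with rfl | hki
  · simp only [if_pos rfl, if_neg hij, if_neg (Ne.symm hij), Real.cos_add, Real.sin_add,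
      eq_self_iff_true, if_true]
    ring
  · rcases eq_or_ne k j with rfl | hkj
    · simp only [if_neg hki, if_pos rfl, if_neg hij, if_neg (Ne.symm hij),
        Real.cos_add, Real.sin_add, eq_self_iff_true, if_true]
      ring
    · simp only [if_neg hki, if_neg hkj]


theorem abs_cos_sub_cos_le (a b : ℝ) : |Real.cos a - Real.cos b| ≤ |a - b| := by
  rw [Real.cos_sub_cos]
  have h1 : |Real.sin ((a + b) / 2)| ≤ 1 := Real.abs_sin_le_one _
  have h2 : |Real.sin ((a - b) / 2)| ≤ |(a - b) / 2| := Real.abs_sin_le_abs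
  have h3 : |(a - b) / 2| = |a - b| / 2 := by rw [abs_div]; norm_num
  calc |(-2) * Real.sin ((a + b) / 2) * Real.sin ((a - b) / 2)|
      = 2 * (|Real.sin ((a + b) / 2)| * |Real.sin ((a - b) / 2)|) := by
        rw [abs_mul, abs_mul]; norm_num; ring
    _ ≤ 2 * (1 * (|a - b| / 2)) := by
        apply mul_le_mul_of_nonneg_left _ (by norm_num)
        exact mul_le_mul h1 (h3 ▸ h2) (abs_nonneg _) zero_le_one
    _ = |a - b| := by ring

theorem abs_sin_sub_sin_le (a b : ℝ) : |Real.sin a - Real.sin b| ≤ |a - b| := by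
  rw [Real.sin_sub_sin]
  have h1 : |Real.cos ((a + b) / 2)| ≤ 1 := Real.abs_cos_le_one _
  have h2 : |Real.sin ((a - b) / 2)| ≤ |(a - b) / 2| := Real.abs_sin_le_abs
  have h3 : |(a - b) / 2| = |a - b| / 2 := by rw [abs_div]; norm_num
  calc |2 * Real.sin ((a - b) / 2) * Real.cos ((a + b) / 2)|
      = 2 * (|Real.sin ((a - b) / 2)| * |Real.cos ((a + b) / 2)|) := by
        rw [abs_mul, abs_mul]; norm_num; ring
    _ ≤ 2 * ((|a - b| / 2) * 1) := by
        apply mul_le_mul_of_nonneg_left _ (by norm_num)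
        exact mul_le_mul (h3 ▸ h2) h1 (abs_nonneg _) (by positivity)
    _ = |a - b| := by ring

theorem norm_rotCLM_sub_apply_le (i j : Fin d) (θ θ' : ℝ) (x : Fin d → ℝ) :
    ‖(rotCLM i j θ - rotCLM i j θ') x‖ ≤ 2 * |θ - θ'| * ‖x‖ := by
  have hxi : ‖x i‖ ≤ ‖x‖ := norm_le_pi_norm x i
  have hxj : ‖x j‖ ≤ ‖x‖ := norm_le_pi_norm x j
  have hc : |Real.cos θ - Real.cos θ'| ≤ |θ - θ'| := abs_cos_sub_cos_le θ θ'
  have hs : |Real.sin θ - Real.sin θ'| ≤ |θ - θ'| := abs_sin_sub_sin_le θ θ'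
  rw [pi_norm_le_iff_of_nonneg (by positivity)]
  intro k
  simp only [ContinuousLinearMap.sub_apply, Pi.sub_apply, rotCLM_apply, planarRot,
    Real.norm_eq_abs] at *
  split_ifs
  · calc |Real.cos θ * x i - Real.sin θ * x j - (Real.cos θ' * x i - Real.sin θ' * x j)|
        = |(Real.cos θ - Real.cos θ') * x i - (Real.sin θ - Real.sin θ') * x j| := by ring_nf
      _ ≤ |(Real.cos θ - Real.cos θ') * x i| + |(Real.sin θ - Real.sin θ') * x j| := abs_sub _ _
      _ = |Real.cos θ - Real.cos θ'| * |x i| + |Real.sin θ - Real.sin θ'| * |x j| := by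
          rw [abs_mul, abs_mul]
      _ ≤ |θ - θ'| * ‖x‖ + |θ - θ'| * ‖x‖ :=
          add_le_add (mul_le_mul hc hxi (abs_nonneg _) (abs_nonneg _))
            (mul_le_mul hs hxj (abs_nonneg _) (abs_nonneg _))
      _ = 2 * |θ - θ'| * ‖x‖ := by ring
  · calc |Real.sin θ * x i + Real.cos θ * x j - (Real.sin θ' * x i + Real.cos θ' * x j)|
        = |(Real.sin θ - Real.sin θ') * x i - (-(Real.cos θ - Real.cos θ')) * x j| := by ring_nf
      _ ≤ |(Real.sin θ - Real.sin θ') * x i| + |(-(Real.cos θ - Real.cos θ')) * x j| := abs_sub _ _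
      _ = |Real.sin θ - Real.sin θ'| * |x i| + |Real.cos θ - Real.cos θ'| * |x j| := by
          rw [abs_mul, abs_mul, abs_neg]
      _ ≤ |θ - θ'| * ‖x‖ + |θ - θ'| * ‖x‖ :=
          add_le_add (mul_le_mul hs hxi (abs_nonneg _) (abs_nonneg _))
            (mul_le_mul hc hxj (abs_nonneg _) (abs_nonneg _))
      _ = 2 * |θ - θ'| * ‖x‖ := by ring
  · simp only [sub_self, abs_zero]
    positivity

theorem continuous_rotCLM (i j : Fin d) : Continuous fun θ : ℝ => rotCLM i j θ := by
  have : LipschitzWith 2 fun θ : ℝ => rotCLM i j θ := by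
    apply LipschitzWith.of_dist_le_mul
    intro a b
    rw [dist_eq_norm, dist_eq_norm]
    apply ContinuousLinearMap.opNorm_le_bound _ (by positivity)
    intro x
    calc ‖(rotCLM i j a - rotCLM i j b) x‖ ≤ 2 * |a - b| * ‖x‖ :=
        norm_rotCLM_sub_apply_le i j a b x
      _ = 2 * ‖a - b‖ * ‖x‖ := by rw [Real.norm_eq_abs]
  exact this.continuous


theorem contDiff_rot_sub (i j : Fin d) (θ : ℝ) {F : (Fin d → ℝ) → ℂ}
    (hF : ContDiff ℝ (⊤ : ℕ∞) F) :
    ContDiff ℝ (⊤ : ℕ∞) fun x => F (planarRot i j θ x) - F x := by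
  have h1 : ContDiff ℝ (⊤ : ℕ∞) fun x => F (rotCLM i j θ x) :=
    hF.comp (rotCLM i j θ).contDiff
  simpa using h1.sub hF

theorem iteratedFDeriv_rot_rep (i j : Fin d) (θ : ℝ) {F : (Fin d → ℝ) → ℂ}
    (hF : ContDiff ℝ (⊤ : ℕ∞) F) (n : ℕ) (y : Fin d → ℝ) :
    iteratedFDeriv ℝ n (fun x => F (planarRot i j θ x) - F x) y =
      (iteratedFDeriv ℝ n F (rotCLM i j θ y)).compContinuousLinearMap
        (fun _ => rotCLM i j θ) - iteratedFDeriv ℝ n F y := by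
  have heq : (fun x => F (planarRot i j θ x) - F x) = (F ∘ (rotCLM i j θ)) + (-F) := by
    funext x
    simp [sub_eq_add_neg]
  have h2 : ContDiff ℝ (n : WithTop ℕ∞) (-F) := hF.neg.of_le (by exact_mod_cast le_top)
  rw [heq, iteratedFDeriv_add_apply ((hF.comp (rotCLM i j θ).contDiff).of_le (by exact_mod_cast le_top)).contDiffAt
    h2.contDiffAt, iteratedFDeriv_neg_apply,
    (rotCLM i j θ).iteratedFDeriv_comp_right hF y (by exact_mod_cast le_top), sub_eq_add_neg]

theorem continuous_theta (i j : Fin d) {F : (Fin d → ℝ) → ℂ}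
    (hF : ContDiff ℝ (⊤ : ℕ∞) F) (n : ℕ) (y : Fin d → ℝ) :
    Continuous fun θ : ℝ =>
      iteratedFDeriv ℝ n (fun x => F (planarRot i j θ x) - F x) y := by
  simp only [iteratedFDeriv_rot_rep i j _ hF n y]
  apply Continuous.sub _ continuous_const
  have hkey : ∀ θ : ℝ,
      (iteratedFDeriv ℝ n F (rotCLM i j θ y)).compContinuousLinearMap
        (fun _ => rotCLM i j θ) =
      (ContinuousMultilinearMap.compContinuousLinearMapContinuousMultilinear ℝ
        (fun _ : Fin n => (Fin d → ℝ)) (fun _ : Fin n => (Fin d → ℝ)) ℂ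
        (fun _ => rotCLM i j θ)) (iteratedFDeriv ℝ n F (rotCLM i j θ y)) := fun θ => rfl
  simp only [hkey]
  have c1 : Continuous fun θ : ℝ =>
      (ContinuousMultilinearMap.compContinuousLinearMapContinuousMultilinear ℝ
        (fun _ : Fin n => (Fin d → ℝ)) (fun _ : Fin n => (Fin d → ℝ)) ℂ
        (fun _ : Fin n => rotCLM i j θ)) := by
    apply (ContinuousMultilinearMap.compContinuousLinearMapContinuousMultilinear ℝ
      (fun _ : Fin n => (Fin d → ℝ)) (fun _ : Fin n => (Fin d → ℝ)) ℂ).cont.comp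
    exact continuous_pi fun _ => continuous_rotCLM i j
  have c2 : Continuous fun θ : ℝ => iteratedFDeriv ℝ n F (rotCLM i j θ y) := by
    apply (hF.continuous_iteratedFDeriv (by exact_mod_cast le_top)).comp
    exact isBoundedBilinearMap_apply.continuous.comp
      ((continuous_rotCLM i j).prodMk continuous_const)
  exact isBoundedBilinearMap_apply.continuous.comp (c1.prodMk c2)

theorem key_triangle (i j : Fin d) (hij : i ≠ j) {F : (Fin d → ℝ) → ℂ}
    (hF : ContDiff ℝ (⊤ : ℕ∞) F) (θ φ : ℝ) (n : ℕ) (x : Fin d → ℝ) :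
    ‖iteratedFDeriv ℝ n (fun x => F (planarRot i j θ x) - F x) x‖ ≤
      2 ^ n * ‖iteratedFDeriv ℝ n (fun y => F (planarRot i j (θ - φ) y) - F y)
          (planarRot i j φ x)‖ +
        ‖iteratedFDeriv ℝ n (fun x => F (planarRot i j φ x) - F x) x‖ := by
  set g : (Fin d → ℝ) → ℂ := fun y => F (planarRot i j (θ - φ) y) - F y with hgdef
  have hg : ContDiff ℝ (⊤ : ℕ∞) g := contDiff_rot_sub i j (θ - φ) hF
  have hh : ContDiff ℝ (⊤ : ℕ∞) (fun x => F (planarRot i j φ x) - F x) := contDiff_rot_sub i j φ hF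
  have heq : (fun x => F (planarRot i j θ x) - F x) =
      (g ∘ (rotCLM i j φ)) + (fun x => F (planarRot i j φ x) - F x) := by
    funext z
    simp only [Pi.add_apply, Function.comp_apply, rotCLM_apply, hgdef,
      planarRot_comp i j hij (θ - φ) φ z, sub_add_cancel]
    abel
  rw [heq, iteratedFDeriv_add_apply ((hg.comp (rotCLM i j φ).contDiff).of_le (by exact_mod_cast le_top)).contDiffAt
    (hh.of_le (by exact_mod_cast le_top)).contDiffAt]
  refine (norm_add_le _ _).trans (add_le_add_left ?_ _)
  rw [(rotCLM i j φ).iteratedFDeriv_comp_right hg x (by exact_mod_cast le_top)]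
  calc ‖(iteratedFDeriv ℝ n g (rotCLM i j φ x)).compContinuousLinearMap
        fun _ => rotCLM i j φ‖
      ≤ ‖iteratedFDeriv ℝ n g (rotCLM i j φ x)‖ * ∏ _k : Fin n, ‖rotCLM i j φ‖ :=
        ContinuousMultilinearMap.norm_compContinuousLinearMap_le _ _
    _ ≤ ‖iteratedFDeriv ℝ n g (rotCLM i j φ x)‖ * 2 ^ n := by
        apply mul_le_mul_of_nonneg_left _ (norm_nonneg _)
        calc (∏ _k : Fin n, ‖rotCLM i j φ‖) ≤ ∏ _k : Fin n, (2 : ℝ) :=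
            Finset.prod_le_prod (fun _ _ => norm_nonneg _) (fun _ _ => norm_rotCLM_le i j φ)
          _ = 2 ^ n := by simp
    _ = 2 ^ n * ‖iteratedFDeriv ℝ n g (planarRot i j φ x)‖ := by rw [mul_comm, rotCLM_apply]
  

end PlanarAux

open PlanarAux Filter MeasureTheory Topology in
/-- A Colombeau generalized function invariant under all classical rotations in the
`(e_i, e_j)`-plane is invariant under such rotations with bounded generalized angle. -/
theorem invariance_planar_rotations {d : ℕ} (i j : Fin d) (hij : i < j)
    (f : ℝ → (Fin d → ℝ) → ℂ)
    (hf_smooth : ∀ ε ∈ Set.Ioo (0 : ℝ) 1, ContDiff ℝ (⊤ : ℕ∞) (f ε))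
    (hf_mod : Moderate f)
    (hf_inv : ∀ θ : ℝ, Negligible (fun ε x => f ε (planarRot i j θ x) - f ε x)) :
    ∀ θ : ℝ → ℝ, (∃ C > (0 : ℝ), ∀ ε ∈ Set.Ioo (0 : ℝ) 1, |θ ε| ≤ C) →
      Negligible (fun ε x => f ε (planarRot i j (θ ε) x) - f ε x) := by
  intro θ hθ
  obtain ⟨M, hM0, hM⟩ := hθ
  have hne : i ≠ j := ne_of_lt hij
  intro K hK n b
  by_contra hcon
  push_neg at hcon
  -- a compact ball framework
  obtain ⟨r, hrK⟩ := hK.isBounded.subset_closedBall (0 : Fin d → ℝ)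
  set R : ℝ := max r 1 with hR
  have hR1 : (1:ℝ) ≤ R := le_max_right _ _
  have hR0 : (0:ℝ) < R := lt_of_lt_of_le one_pos hR1
  have hKR : K ⊆ Metric.closedBall 0 R :=
    hrK.trans (Metric.closedBall_subset_closedBall (le_max_left _ _))
  set K₁ : Set (Fin d → ℝ) := Metric.closedBall 0 (2 * R) with hK₁def
  have hK₁ : IsCompact K₁ := isCompact_closedBall _ _
  have hKK₁ : K ⊆ K₁ := hKR.trans (Metric.closedBall_subset_closedBall (by linarith))
  -- the bad sequence of epsilons
  choose e he₁ he₂ hex using fun k : ℕ => hcon 1 one_pos (1 / (k + 1)) (by positivity)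
  have hepos : ∀ k, 0 < e k := fun k => (he₁ k).1
  have he_to : Tendsto e atTop (𝓝 0) :=
    squeeze_zero (fun k => (hepos k).le) (fun k => (he₂ k).le)
      tendsto_one_div_add_atTop_nhds_zero_nat
  -- bad sets of angles
  set B : ℕ → Set ℝ := fun k => {φ : ℝ | ∃ y ∈ K₁, e k ^ b / 2 <
    2 ^ n * ‖iteratedFDeriv ℝ n (fun x => f (e k) (planarRot i j φ x) - f (e k) x) y‖}
    with hBdef
  have hBopen : ∀ k, IsOpen (B k) := by
    intro k
    have hBu : B k = ⋃ y ∈ K₁, {φ : ℝ | e k ^ b / 2 <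
        2 ^ n * ‖iteratedFDeriv ℝ n (fun x => f (e k) (planarRot i j φ x) - f (e k) x) y‖} := by
      ext φ
      simp [hBdef]
    rw [hBu]
    exact isOpen_biUnion fun y _ => isOpen_lt continuous_const
      (continuous_const.mul (continuous_theta i j (hf_smooth (e k) (he₁ k)) n y).norm)
  have h2n : (1:ℝ) ≤ 2 ^ n := one_le_pow₀ (by norm_num)
  -- the covering property
  have hcov : ∀ k φ, φ ∈ B k ∨ θ (e k) - φ ∈ B k := by
    intro k φ
    by_contra hx
    push_neg at hx
    obtain ⟨h1, h2⟩ := hx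
    simp only [hBdef, Set.mem_setOf_eq, not_exists, not_and, not_lt] at h1 h2
    obtain ⟨x, hxK, hxgt⟩ := hex k
    have hx1 : ‖x‖ ≤ R := by
      have := hKR hxK
      rwa [Metric.mem_closedBall, dist_zero_right] at this
    have hy₁ : planarRot i j φ x ∈ K₁ := by
      rw [hK₁def, Metric.mem_closedBall, dist_zero_right]
      calc ‖planarRot i j φ x‖ ≤ 2 * ‖x‖ := norm_planarRot_le i j φ x
        _ ≤ 2 * R := by linarith
    have htri := key_triangle i j hne (hf_smooth (e k) (he₁ k)) (θ (e k)) φ n x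
    have hb1 := h2 (planarRot i j φ x) hy₁
    have hb2 := h1 x (hKK₁ hxK)
    have hnn : (0:ℝ) ≤ ‖iteratedFDeriv ℝ n
        (fun x => f (e k) (planarRot i j φ x) - f (e k) x) x‖ := norm_nonneg _
    have hb2' : ‖iteratedFDeriv ℝ n
        (fun x => f (e k) (planarRot i j φ x) - f (e k) x) x‖ ≤ e k ^ b / 2 := by
      have hmul := mul_le_mul_of_nonneg_right h2n hnn
      rw [one_mul] at hmul
      linarith
    rw [one_mul] at hxgt
    linarith
  -- the interval and bad sets restricted
  set I : Set ℝ := Set.Icc (-(M + 2 * Real.pi)) (M + 2 * Real.pi) with hIdef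
  set S : ℕ → Set ℝ := fun k => B k ∩ I with hSdef
  have hπ : (0:ℝ) < Real.pi := Real.pi_pos
  have hScover : ∀ k, Set.Icc (0:ℝ) (2 * Real.pi) ⊆
      S k ∪ ((fun φ => θ (e k) - φ) ⁻¹' S k) := by
    intro k φ hφ
    have hMk : |θ (e k)| ≤ M := hM (e k) (he₁ k)
    rw [Set.mem_Icc] at hφ
    rw [abs_le] at hMk
    rcases hcov k φ with h | h
    · exact Or.inl ⟨h, Set.mem_Icc.2 ⟨by linarith, by linarith⟩⟩
    · exact Or.inr (by
        simp only [Set.mem_preimage, hSdef]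
        exact ⟨h, Set.mem_Icc.2 ⟨by linarith, by linarith⟩⟩)
  have hSmeas : ∀ k, MeasurableSet (S k) := fun k =>
    (hBopen k).measurableSet.inter measurableSet_Icc
  have hSvol : ∀ k, ENNReal.ofReal Real.pi ≤ volume (S k) := by
    intro k
    have h1 : volume (Set.Icc (0:ℝ) (2*Real.pi)) ≤
        volume (S k) + volume ((fun φ => θ (e k) - φ) ⁻¹' S k) :=
      le_trans (measure_mono (hScover k)) (measure_union_le _ _)
    have h2' : volume ((fun φ => θ (e k) - φ) ⁻¹' S k) = volume (S k) := by
      have hcomp : (fun φ : ℝ => θ (e k) - φ) = (fun ψ : ℝ => θ (e k) + ψ) ∘ Neg.neg := by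
        funext φ
        simp [sub_eq_add_neg]
      rw [hcomp, Set.preimage_comp, Measure.measure_preimage_neg, measure_preimage_add]
    rw [h2', Real.volume_Icc] at h1
    by_contra hlt
    push_neg at hlt
    have hadd := ENNReal.add_lt_add hlt hlt
    have h3 : ENNReal.ofReal (2 * Real.pi - 0) =
        ENNReal.ofReal Real.pi + ENNReal.ofReal Real.pi := by
      rw [← ENNReal.ofReal_add Real.pi_nonneg Real.pi_nonneg]
      ring_nf
    rw [h3] at h1
    exact absurd (h1.trans_lt hadd) (lt_irrefl _)
  -- decreasing tails
  set U : ℕ → Set ℝ := fun m => ⋃ k ∈ Set.Ici m, S k with hUdef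
  have hUanti : Antitone U := fun a c hac =>
    Set.biUnion_subset_biUnion_left (Set.Ici_subset_Ici.2 hac)
  have hUmeas : ∀ m, NullMeasurableSet (U m) volume := fun m =>
    (MeasurableSet.biUnion (Set.to_countable _) fun k _ => hSmeas k).nullMeasurableSet
  have hUfin : volume (U 0) ≠ ⊤ := by
    have hsub : U 0 ⊆ I := Set.iUnion₂_subset fun k _ => Set.inter_subset_right
    have : volume I ≠ ⊤ := by
      rw [hIdef, Real.volume_Icc]
      exact ENNReal.ofReal_ne_top
    exact ne_top_of_le_ne_top this (measure_mono hsub)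
  -- the intersection is empty by pointwise negligibility
  have hInter : ⋂ m, U m = ∅ := by
    rw [Set.eq_empty_iff_forall_notMem]
    intro φ hφ
    simp only [Set.mem_iInter] at hφ
    obtain ⟨C, hC0, ε₀, hε₀, hbound⟩ := hf_inv φ K₁ hK₁ n (b + 1)
    have hδ : (0:ℝ) < min ε₀ (1 / (2 ^ (n + 1) * C)) := by positivity
    have hev : ∀ᶠ k in atTop, e k < min ε₀ (1 / (2 ^ (n + 1) * C)) :=
      he_to.eventually_lt_const hδ
    obtain ⟨m, hm⟩ := eventually_atTop.1 hev
    obtain ⟨k, hkm, hφS⟩ := Set.mem_iUnion₂.1 (hφ m)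
    obtain ⟨y, hyK₁, hylt⟩ := hφS.1
    have hbnd := hbound (e k) (he₁ k) ((hm k hkm).trans_le (min_le_left _ _)) y hyK₁
    have hrpow : e k ^ (b + 1) = e k ^ b * e k := Real.rpow_add_one (hepos k).ne' b
    rw [hrpow] at hbnd
    have hsmall : e k < 1 / (2 ^ (n + 1) * C) := (hm k hkm).trans_le (min_le_right _ _)
    have h2np : (0:ℝ) < 2 ^ n := by positivity
    have hbpos : (0:ℝ) < e k ^ b := Real.rpow_pos_of_pos (hepos k) b
    have hC2 : 2 ^ n * C * e k ≤ 1 / 2 := by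
      rw [lt_div_iff₀ (by positivity)] at hsmall
      have hps : (2:ℝ) ^ (n + 1) = 2 ^ n * 2 := pow_succ 2 n
      nlinarith
    have hchain : 2 ^ n * ‖iteratedFDeriv ℝ n
        (fun x => f (e k) (planarRot i j φ x) - f (e k) x) y‖ ≤
        (2 ^ n * C * e k) * e k ^ b := by
      have := mul_le_mul_of_nonneg_left hbnd h2np.le
      nlinarith
    have hfin : (2 ^ n * C * e k) * e k ^ b ≤ (1/2) * e k ^ b :=
      mul_le_mul_of_nonneg_right hC2 hbpos.le
    linarith
  have hmeas := hUanti.measure_iInter hUmeas ⟨0, hUfin⟩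
  rw [hInter] at hmeas
  have hge : ENNReal.ofReal Real.pi ≤ ⨅ m, volume (U m) :=
    le_iInf fun m => (hSvol m).trans
      (measure_mono (Set.subset_biUnion_of_mem (Set.mem_Ici.2 le_rfl)))
  rw [← hmeas, measure_empty] at hge
  have : Real.pi ≤ 0 := by
    simpa [ENNReal.ofReal_eq_zero] using (le_antisymm hge zero_le)
  linarith
end

section
/- Fix 1 ≤ i < j ≤ d. Let (f_ε)_{ε∈(0,1)} be a moderate net of smooth functions ℝ^d → ℂ. Suppose that for every θ ∈ ℝ the net (x ↦ f_ε(σ_{i,j,θ} x) − f_ε(x))_ε is negligible. Then for every bounded family (θ_ε)_{ε∈(0,1)} of real numbers, the net (x ↦ f_ε(σ_{i,j,θ_ε} x) − f_ε(x))_ε is negligible. -/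
/-- The hyperbolic rotation with parameter `θ` in the `(e_i, e_j)`-coordinate
plane of `ℝ^d`. -/
noncomputable def hypRot {d : ℕ} (i j : Fin d) (θ : ℝ) (x : Fin d → ℝ) : Fin d → ℝ :=
  fun k =>
    if k = i then Real.cosh θ * x i + Real.sinh θ * x j
    else if k = j then Real.sinh θ * x i + Real.cosh θ * x j
    else x k

noncomputable def hypRotCLM {d : ℕ} (i j : Fin d) (θ : ℝ) : (Fin d → ℝ) →L[ℝ] (Fin d → ℝ) :=
  LinearMap.toContinuousLinearMap
  { toFun := hypRot i j θ
    map_add' := by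
      intro x y; funext k; simp only [hypRot, Pi.add_apply]; split_ifs <;> ring
    map_smul' := by
      intro c x; funext k
      simp only [hypRot, Pi.smul_apply, smul_eq_mul, RingHom.id_apply]
      split_ifs <;> ring }

lemma hypRotCLM_coe {d : ℕ} (i j : Fin d) (θ : ℝ) : ⇑(hypRotCLM i j θ) = hypRot i j θ := rfl

lemma hypRot_zero {d : ℕ} (i j : Fin d) (x : Fin d → ℝ) : hypRot i j 0 x = x := by
  funext k
  simp only [hypRot, Real.cosh_zero, Real.sinh_zero, one_mul, zero_mul, add_zero, zero_add]
  split_ifs with h1 h2 <;> simp_all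

lemma hypRot_apply_i {d : ℕ} {i j : Fin d} (hij : i ≠ j) (θ : ℝ) (x : Fin d → ℝ) :
    hypRot i j θ x i = Real.cosh θ * x i + Real.sinh θ * x j := by simp [hypRot]

lemma hypRot_apply_j {d : ℕ} {i j : Fin d} (hij : i ≠ j) (θ : ℝ) (x : Fin d → ℝ) :
    hypRot i j θ x j = Real.sinh θ * x i + Real.cosh θ * x j := by
  simp [hypRot, hij.symm]

lemma hypRot_add {d : ℕ} {i j : Fin d} (hij : i ≠ j) (s t : ℝ) (x : Fin d → ℝ) :
    hypRot i j s (hypRot i j t x) = hypRot i j (s + t) x := by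
  funext k
  by_cases hk : k = i
  · subst hk
    rw [hypRot_apply_i hij, hypRot_apply_i hij, hypRot_apply_i hij, hypRot_apply_j hij,
      Real.cosh_add, Real.sinh_add]
    ring
  · by_cases hk2 : k = j
    · subst hk2
      rw [hypRot_apply_j hij, hypRot_apply_j hij, hypRot_apply_i hij, hypRot_apply_j hij,
        Real.cosh_add, Real.sinh_add]
      ring
    · simp only [hypRot, if_neg hk, if_neg hk2]

lemma norm_hypRotCLM_le {d : ℕ} (i j : Fin d) (θ : ℝ) :
    ‖hypRotCLM i j θ‖ ≤ Real.cosh θ + |Real.sinh θ| := by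
  have h1 : (1:ℝ) ≤ Real.cosh θ + |Real.sinh θ| :=
    le_add_of_le_of_nonneg (Real.one_le_cosh θ) (abs_nonneg _)
  apply ContinuousLinearMap.opNorm_le_bound _ (by linarith) (fun x => ?_)
  rw [hypRotCLM_coe]
  apply pi_norm_le_iff_of_nonneg (by positivity) |>.2
  intro k
  have hxi : ‖x i‖ ≤ ‖x‖ := norm_le_pi_norm x i
  have hxj : ‖x j‖ ≤ ‖x‖ := norm_le_pi_norm x j
  have hxk : ‖x k‖ ≤ ‖x‖ := norm_le_pi_norm x k
  have hc : 0 < Real.cosh θ := Real.cosh_pos (x := θ)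
  simp only [hypRot, Real.norm_eq_abs] at *
  split_ifs
  · calc |Real.cosh θ * x i + Real.sinh θ * x j|
        ≤ |Real.cosh θ * x i| + |Real.sinh θ * x j| := abs_add_le _ _
      _ = Real.cosh θ * |x i| + |Real.sinh θ| * |x j| := by
          rw [abs_mul, abs_mul, abs_of_pos hc]
      _ ≤ (Real.cosh θ + |Real.sinh θ|) * ‖x‖ := by
          rw [add_mul]
          have := abs_nonneg (Real.sinh θ)
          nlinarith [norm_nonneg x]
  · calc |Real.sinh θ * x i + Real.cosh θ * x j|
        ≤ |Real.sinh θ * x i| + |Real.cosh θ * x j| := abs_add_le _ _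
      _ = |Real.sinh θ| * |x i| + Real.cosh θ * |x j| := by
          rw [abs_mul, abs_mul, abs_of_pos hc]
      _ ≤ (Real.cosh θ + |Real.sinh θ|) * ‖x‖ := by
          rw [add_mul]
          have := hxi; have := hxj; nlinarith [abs_nonneg (Real.sinh θ), norm_nonneg x]
  · calc |x k| ≤ ‖x‖ := hxk
      _ ≤ (Real.cosh θ + |Real.sinh θ|) * ‖x‖ := by nlinarith [norm_nonneg x]

lemma continuous_hypRot_param {d : ℕ} (i j : Fin d) (y : Fin d → ℝ) :
    Continuous (fun t : ℝ => hypRot i j t y) := by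
  apply continuous_pi
  intro k
  simp only [hypRot]
  split_ifs <;> fun_prop

lemma continuous_hypRot {d : ℕ} (i j : Fin d) :
    Continuous (fun p : ℝ × (Fin d → ℝ) => hypRot i j p.1 p.2) := by
  apply continuous_pi
  intro k
  simp only [hypRot]
  split_ifs <;> fun_prop

lemma itFD_sub {d : ℕ} {g h : (Fin d → ℝ) → ℂ} (hg : ContDiff ℝ (⊤ : ℕ∞) g) (hh : ContDiff ℝ (⊤ : ℕ∞) h)
    (n : ℕ) (x : Fin d → ℝ) :
    iteratedFDeriv ℝ n (fun y => g y - h y) x =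
      iteratedFDeriv ℝ n g x - iteratedFDeriv ℝ n h x := by
  have e : (fun y => g y - h y) = g + fun y => -h y := by
    funext y; simp [sub_eq_add_neg]
  rw [e, iteratedFDeriv_add_apply (hg.of_le (by exact_mod_cast le_top)).contDiffAt ((hh.neg).of_le (by exact_mod_cast le_top)).contDiffAt]
  have e2 : iteratedFDeriv ℝ n (fun y => -h y) x = -iteratedFDeriv ℝ n h x :=
    iteratedFDeriv_neg_apply
  rw [e2, sub_eq_add_neg]

lemma contDiff_comp_hypRot {d : ℕ} {i j : Fin d} {g : (Fin d → ℝ) → ℂ} (hg : ContDiff ℝ (⊤ : ℕ∞) g)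
    (t : ℝ) : ContDiff ℝ (⊤ : ℕ∞) (fun y => g (hypRot i j t y)) := by
  have := hg.comp (hypRotCLM i j t).contDiff (𝕜 := ℝ)
  simpa [hypRotCLM_coe, Function.comp_def] using this

lemma itFD_comp {d : ℕ} {i j : Fin d} {g : (Fin d → ℝ) → ℂ} (hg : ContDiff ℝ (⊤ : ℕ∞) g)
    (t : ℝ) (n : ℕ) (x : Fin d → ℝ) :
    iteratedFDeriv ℝ n (fun y => g (hypRot i j t y)) x =
      (iteratedFDeriv ℝ n g (hypRot i j t x)).compContinuousLinearMap
        (fun _ => hypRotCLM i j t) := by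
  have := (hypRotCLM i j t).iteratedFDeriv_comp_right hg x (i := n) (by exact_mod_cast le_top)
  simpa [hypRotCLM_coe, Function.comp_def] using this

lemma itFD_comp_norm {d : ℕ} {i j : Fin d} {g : (Fin d → ℝ) → ℂ} (hg : ContDiff ℝ (⊤ : ℕ∞) g)
    {t W : ℝ} (hW : ‖hypRotCLM i j t‖ ≤ W) (n : ℕ) (x : Fin d → ℝ) :
    ‖iteratedFDeriv ℝ n (fun y => g (hypRot i j t y)) x‖ ≤
      W ^ n * ‖iteratedFDeriv ℝ n g (hypRot i j t x)‖ := by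
  rw [itFD_comp hg t n x]
  calc ‖(iteratedFDeriv ℝ n g (hypRot i j t x)).compContinuousLinearMap
        (fun _ => hypRotCLM i j t)‖
      ≤ ‖iteratedFDeriv ℝ n g (hypRot i j t x)‖ * ∏ _l : Fin n, ‖hypRotCLM i j t‖ :=
        ContinuousMultilinearMap.norm_compContinuousLinearMap_le _ _
    _ ≤ ‖iteratedFDeriv ℝ n g (hypRot i j t x)‖ * W ^ n := by
        gcongr
        rw [Finset.prod_const]
        simp only [Finset.card_univ, Fintype.card_fin]
        exact pow_le_pow_left₀ (norm_nonneg _) hW n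
    _ = W ^ n * ‖iteratedFDeriv ℝ n g (hypRot i j t x)‖ := mul_comm _ _


lemma baire_interval {E : ℕ → Set ℝ} (hclosed : ∀ m, IsClosed (E m))
    (hcover : ∀ t : ℝ, ∃ m, t ∈ E m) (a c : ℝ) (hac : a < c) :
    ∃ m : ℕ, ∃ α₀ ∈ Set.Icc a c, ∃ δ > (0:ℝ),
      ∀ t ∈ Set.Icc a c, |t - α₀| < δ → t ∈ E m := by
  haveI : Nonempty (Set.Icc a c) := ⟨⟨a, by constructor <;> linarith⟩⟩
  haveI : CompleteSpace (Set.Icc a c : Set ℝ) := (isClosed_Icc).completeSpace_coe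
  obtain ⟨m, hmI⟩ := nonempty_interior_of_iUnion_of_closed
    (f := fun m : ℕ => (Subtype.val : Set.Icc a c → ℝ) ⁻¹' (E m))
    (fun m => (hclosed m).preimage continuous_subtype_val)
    (Set.eq_univ_iff_forall.2 fun u => Set.mem_iUnion.2 ((hcover u.1).imp fun _ hm => hm))
  obtain ⟨⟨α₀, hα₀⟩, hint⟩ := hmI
  rw [mem_interior_iff_mem_nhds, Metric.mem_nhds_iff] at hint
  obtain ⟨δ, hδ, hball⟩ := hint
  refine ⟨m, α₀, hα₀, δ, hδ, ?_⟩
  intro t ht hd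
  have h : (⟨t, ht⟩ : Set.Icc a c) ∈ Metric.ball ⟨α₀, hα₀⟩ δ := by
    simp only [Metric.mem_ball, Subtype.dist_eq, Real.dist_eq]
    exact hd
  exact hball h

set_option maxHeartbeats 1600000 in
/-- A Colombeau generalized function invariant under all classical hyperbolic rotations in
the `(e_i, e_j)`-plane is invariant under such maps with bounded generalized parameter. -/
theorem invariance_hyperbolic_rotations {d : ℕ} (i j : Fin d) (hij : i < j)
    (f : ℝ → (Fin d → ℝ) → ℂ)
    (hf_smooth : ∀ ε ∈ Set.Ioo (0 : ℝ) 1, ContDiff ℝ (⊤ : ℕ∞) (f ε))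
    (hf_mod : Moderate f)
    (hf_inv : ∀ θ : ℝ, Negligible (fun ε x => f ε (hypRot i j θ x) - f ε x)) :
    ∀ θ : ℝ → ℝ, (∃ C > (0 : ℝ), ∀ ε ∈ Set.Ioo (0 : ℝ) 1, |θ ε| ≤ C) →
      Negligible (fun ε x => f ε (hypRot i j (θ ε) x) - f ε x) := by
  classical
  have hne : i ≠ j := Fin.ne_of_lt hij
  intro θf hb
  obtain ⟨C, hC, hθC⟩ := hb
  intro K hK n b
  -- global constants
  set M : ℝ := 2 * C + 4 with hMdef
  have hMpos : 0 < M := by simp only [hMdef]; linarith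
  set W : ℝ := Real.cosh M + Real.sinh M with hWdef
  have hW1 : 1 ≤ W := le_add_of_le_of_nonneg (Real.one_le_cosh M) (Real.sinh_pos_iff.2 hMpos).le
  have hWpos : 0 < W := lt_of_lt_of_le one_pos hW1
  have hA : ∀ t : ℝ, |t| ≤ M → ‖hypRotCLM i j t‖ ≤ W := by
    intro t ht
    refine (norm_hypRotCLM_le i j t).trans ?_
    have h1 : Real.cosh t ≤ Real.cosh M := by
      rw [Real.cosh_le_cosh]; rwa [abs_of_pos hMpos]
    have h2 : |Real.sinh t| ≤ Real.sinh M := by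
      rw [Real.abs_sinh]; exact Real.sinh_le_sinh.2 ht
    linarith
  -- the big compact set
  set K₁ : Set (Fin d → ℝ) :=
    (fun p : ℝ × (Fin d → ℝ) => hypRot i j p.1 p.2) '' (Set.Icc (-M) M ×ˢ K) with hK₁def
  have hK₁ : IsCompact K₁ := (isCompact_Icc.prod hK).image (continuous_hypRot i j)
  have hmem : ∀ t : ℝ, |t| ≤ M → ∀ x ∈ K, hypRot i j t x ∈ K₁ := by
    intro t ht x hx
    exact ⟨(t, x), ⟨Set.mem_Icc.2 (abs_le.1 ht), hx⟩, rfl⟩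
  -- the closed sets for the Baire argument
  set E : ℕ → Set ℝ := fun m =>
    {t : ℝ | ∀ ε ∈ Set.Ioo (0:ℝ) 1, ε < 1/(m+1) → ∀ z ∈ K₁, ∀ v : Fin n → (Fin d → ℝ),
      ‖iteratedFDeriv ℝ n (fun y => f ε (hypRot i j t y) - f ε y) z v‖ ≤ ε ^ b * ∏ l, ‖v l‖}
    with hEdef
  have hEop : ∀ m : ℕ, ∀ t ∈ E m, ∀ ε ∈ Set.Ioo (0:ℝ) 1, ε < 1/(m+1) → ∀ z ∈ K₁,
      ‖iteratedFDeriv ℝ n (fun y => f ε (hypRot i j t y) - f ε y) z‖ ≤ ε ^ b := by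
    intro m t ht ε hε hεm z hz
    exact ContinuousMultilinearMap.opNorm_le_bound (Real.rpow_nonneg hε.1.le b)
      (fun v => ht ε hε hεm z hz v)
  have hclosed : ∀ m, IsClosed (E m) := by
    intro m
    have hEeq : E m = ⋂ (ε : ℝ), ⋂ (_ : ε ∈ Set.Ioo (0:ℝ) 1), ⋂ (_ : ε < 1/(m+1)),
        ⋂ (z : Fin d → ℝ), ⋂ (_ : z ∈ K₁), ⋂ (v : Fin n → (Fin d → ℝ)),
        {t : ℝ | ‖iteratedFDeriv ℝ n (fun y => f ε (hypRot i j t y) - f ε y) z v‖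
          ≤ ε ^ b * ∏ l, ‖v l‖} := by
      ext t
      simp only [hEdef, Set.mem_setOf_eq, Set.mem_iInter]
    rw [hEeq]
    refine isClosed_iInter fun ε => isClosed_iInter fun hε => isClosed_iInter fun hεm =>
      isClosed_iInter fun z => isClosed_iInter fun hz => isClosed_iInter fun v => ?_
    have hfε := hf_smooth ε hε
    have heq : ∀ t : ℝ, iteratedFDeriv ℝ n (fun y => f ε (hypRot i j t y) - f ε y) z v
        = (iteratedFDeriv ℝ n (f ε) (hypRot i j t z)) (fun l => hypRot i j t (v l))
          - iteratedFDeriv ℝ n (f ε) z v := by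
      intro t
      rw [itFD_sub (contDiff_comp_hypRot hfε t) hfε n z, ContinuousMultilinearMap.sub_apply,
        itFD_comp hfε t n z]
      rfl
    simp only [heq]
    apply isClosed_le _ continuous_const
    apply Continuous.norm
    apply Continuous.sub _ continuous_const
    have hT : Continuous (iteratedFDeriv ℝ n (f ε)) := hfε.continuous_iteratedFDeriv (by exact_mod_cast le_top)
    have h1 : Continuous fun t : ℝ => iteratedFDeriv ℝ n (f ε) (hypRot i j t z) :=
      hT.comp (continuous_hypRot_param i j z)
    have h2 : Continuous fun t : ℝ => (fun l => hypRot i j t (v l)) :=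
      continuous_pi fun l => continuous_hypRot_param i j (v l)
    exact h1.eval h2
  have hcover : ∀ t : ℝ, ∃ m : ℕ, t ∈ E m := by
    intro t
    obtain ⟨Ct, hCt, ε₀t, hε₀t, hbt⟩ := hf_inv t K₁ hK₁ n (b+1)
    obtain ⟨m, hm⟩ := exists_nat_one_div_lt (show (0:ℝ) < min ε₀t (1/Ct) by positivity)
    refine ⟨m, ?_⟩
    intro ε hε hεm z hz v
    have hεlt : ε < min ε₀t (1/Ct) := hεm.trans hm
    have hS := hbt ε hε (hεlt.trans_le (min_le_left _ _)) z hz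
    have hCtε : Ct * ε ≤ 1 := by
      have : ε < 1/Ct := hεlt.trans_le (min_le_right _ _)
      rw [lt_div_iff₀ hCt] at this
      nlinarith
    have hkey : Ct * ε ^ (b+1) ≤ ε ^ b := by
      rw [Real.rpow_add hε.1, Real.rpow_one]
      calc Ct * (ε ^ b * ε) = (Ct * ε) * ε ^ b := by ring
        _ ≤ 1 * ε ^ b := by
            have := Real.rpow_nonneg hε.1.le b
            nlinarith
        _ = ε ^ b := one_mul _
    calc ‖iteratedFDeriv ℝ n (fun y => f ε (hypRot i j t y) - f ε y) z v‖
        ≤ ‖iteratedFDeriv ℝ n (fun y => f ε (hypRot i j t y) - f ε y) z‖ * ∏ l, ‖v l‖ :=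
          ContinuousMultilinearMap.le_opNorm _ v
      _ ≤ (Ct * ε ^ (b+1)) * ∏ l, ‖v l‖ := by
          have hp : (0:ℝ) ≤ ∏ l, ‖v l‖ := Finset.prod_nonneg fun l _ => norm_nonneg _
          nlinarith [norm_nonneg (iteratedFDeriv ℝ n (fun y => f ε (hypRot i j t y) - f ε y) z)]
      _ ≤ ε ^ b * ∏ l, ‖v l‖ := by
          have hp : (0:ℝ) ≤ ∏ l, ‖v l‖ := Finset.prod_nonneg fun l _ => norm_nonneg _
          nlinarith
  -- Baire category on the interval [-(C+1), C+1]
  obtain ⟨m, α₀, hα₀, δ, hδ, hgood⟩ :=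
    baire_interval hclosed hcover (-(C+1)) (C+1) (by linarith)
  obtain ⟨hα₀l, hα₀r⟩ := hα₀
  -- a small good interval [α, α+η]
  set η : ℝ := min (δ/2) 1 with hηdef
  have hη : 0 < η := lt_min (by linarith) one_pos
  have hη1 : η ≤ 1 := min_le_right _ _
  have hηδ : η ≤ δ/2 := min_le_left _ _
  set α : ℝ := if α₀ ≤ 0 then α₀ else α₀ - η with hαdef
  have hαE : ∀ s : ℝ, 0 ≤ s → s ≤ η → α + s ∈ E m := by
    intro s hs0 hsη
    by_cases h : α₀ ≤ 0
    · have hα : α = α₀ := by rw [hαdef, if_pos h]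
      refine hgood _ ⟨by rw [hα]; linarith, by rw [hα]; linarith⟩ ?_
      rw [hα, add_sub_cancel_left, abs_of_nonneg hs0]; linarith
    · push_neg at h
      have hα : α = α₀ - η := by rw [hαdef, if_neg (not_le.2 h)]
      refine hgood _ ⟨by rw [hα]; linarith, by rw [hα]; linarith⟩ ?_
      rw [hα]
      have e : α₀ - η + s - α₀ = s - η := by ring
      rw [e]
      have : |s - η| ≤ η := abs_le.2 ⟨by linarith, by linarith⟩
      linarith
  have hαIcc : |α| ≤ C + 1 := by
    rw [hαdef]
    by_cases h : α₀ ≤ 0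
    · rw [if_pos h]; exact abs_le.2 ⟨by linarith, by linarith⟩
    · push_neg at h
      rw [if_neg (not_le.2 h)]; exact abs_le.2 ⟨by linarith, by linarith⟩
  -- uniform smallness for small shift parameters
  have hsmall : ∀ s : ℝ, |s| ≤ η → ∀ ε ∈ Set.Ioo (0:ℝ) 1, ε < 1/(m+1) → ∀ t : ℝ, |t| ≤ C →
      ∀ x ∈ K, ‖iteratedFDeriv ℝ n (fun y => f ε (hypRot i j s y) - f ε y) (hypRot i j t x)‖
        ≤ W ^ n * (2 * ε ^ b) := by
    intro s hs ε hε hεm t ht x hx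
    have hfε := hf_smooth ε hε
    have hs1 : |s| ≤ 1 := hs.trans hη1
    obtain ⟨u, vv, huE, hvE, huv, hub, hvb⟩ :
        ∃ u vv : ℝ, u ∈ E m ∧ vv ∈ E m ∧ u - vv = s ∧ |u| ≤ C + 2 ∧ |vv| ≤ C + 2 := by
      rcases le_or_gt 0 s with h | h
      · have hss : s ≤ η := by rw [abs_of_nonneg h] at hs; exact hs
        refine ⟨α + s, α + 0, hαE s h hss, hαE 0 le_rfl hη.le, by ring, ?_, ?_⟩
        · refine (abs_add_le α s).trans ?_; linarith
        · rw [add_zero]; linarith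
      · have hss : -s ≤ η := by rw [abs_of_neg h] at hs; exact hs
        refine ⟨α + 0, α + (-s), hαE 0 le_rfl hη.le, hαE (-s) (by linarith) hss, by ring, ?_, ?_⟩
        · rw [add_zero]; linarith
        · refine (abs_add_le α (-s)).trans ?_; rw [abs_neg]; linarith
    have hz : hypRot i j (-vv) (hypRot i j t x) = hypRot i j (-vv + t) x :=
      hypRot_add hne _ _ _
    have hzK : hypRot i j (-vv + t) x ∈ K₁ := by
      refine hmem _ ?_ x hx
      refine (abs_add_le (-vv) t).trans ?_
      rw [abs_neg]
      linarith [hMdef]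
    have hid : (fun y => f ε (hypRot i j s y) - f ε y)
        = fun y => (fun z => (f ε (hypRot i j u z) - f ε z)
            - (f ε (hypRot i j vv z) - f ε z)) (hypRot i j (-vv) y) := by
      funext y
      simp only
      rw [hypRot_add hne u (-vv) y, hypRot_add hne vv (-vv) y,
        show u + -vv = s by linarith, show vv + -vv = (0:ℝ) by ring, hypRot_zero]
      ring
    rw [hid]
    have hGsm : ContDiff ℝ (⊤ : ℕ∞) (fun z => (f ε (hypRot i j u z) - f ε z)
        - (f ε (hypRot i j vv z) - f ε z)) :=
      ((contDiff_comp_hypRot hfε u).sub hfε).sub ((contDiff_comp_hypRot hfε vv).sub hfε)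
    have hnv : ‖hypRotCLM i j (-vv)‖ ≤ W := by
      refine hA _ ?_
      rw [abs_neg]
      linarith [hMdef]
    refine (itFD_comp_norm hGsm hnv n (hypRot i j t x)).trans ?_
    rw [hz]
    have hGb : ‖iteratedFDeriv ℝ n (fun z => (f ε (hypRot i j u z) - f ε z)
        - (f ε (hypRot i j vv z) - f ε z)) (hypRot i j (-vv + t) x)‖ ≤ 2 * ε ^ b := by
      rw [itFD_sub ((contDiff_comp_hypRot hfε u).sub hfε)
        ((contDiff_comp_hypRot hfε vv).sub hfε) n _]
      refine (norm_sub_le _ _).trans ?_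
      have b1 := hEop m u huE ε hε hεm _ hzK
      have b2 := hEop m vv hvE ε hε hεm _ hzK
      linarith
    exact mul_le_mul_of_nonneg_left hGb (by positivity)
  -- final assembly
  set R : ℕ := ⌈C / η⌉₊ + 1 with hRdef
  have hRpos : (0:ℝ) < (R:ℝ) := by
    rw [hRdef]; push_cast; positivity
  have hCR : C / (R:ℝ) ≤ η := by
    rw [div_le_iff₀ hRpos]
    have h1 : C / η ≤ (⌈C / η⌉₊ : ℝ) := Nat.le_ceil _
    have h2 : C ≤ (⌈C / η⌉₊ : ℝ) * η := (div_le_iff₀ hη).1 h1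
    rw [hRdef]; push_cast; nlinarith
  refine ⟨(R:ℝ) * (W ^ n * (W ^ n * 2)) + 1, by positivity, 1/(m+1), by positivity, ?_⟩
  intro ε hε hεm x hx
  have hfε := hf_smooth ε hε
  have hτ : |θf ε| ≤ C := hθC ε hε
  set s : ℝ := θf ε / (R:ℝ) with hsdef
  have hsabs : |s| = |θf ε| / (R:ℝ) := by
    rw [hsdef, abs_div, Nat.abs_cast]
  have hsη : |s| ≤ η := by
    rw [hsabs]
    calc |θf ε| / (R:ℝ) ≤ C / (R:ℝ) := by gcongr
      _ ≤ η := hCR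
  have hks : ∀ k : ℕ, k ≤ R → |(k:ℝ) * s| ≤ C := by
    intro k hk
    rw [abs_mul, Nat.abs_cast]
    calc (k:ℝ) * |s| ≤ (R:ℝ) * |s| := by
          have : (k:ℝ) ≤ (R:ℝ) := Nat.cast_le.2 hk
          nlinarith [abs_nonneg s]
      _ = (R:ℝ) * (|θf ε| / (R:ℝ)) := by rw [hsabs]
      _ = |θf ε| := by field_simp
      _ ≤ C := hτ
  have hB : ∀ k : ℕ, k ≤ R → ∀ y ∈ K,
      ‖iteratedFDeriv ℝ n (fun z => f ε (hypRot i j ((k:ℝ) * s) z) - f ε z) y‖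
        ≤ (k:ℝ) * (W ^ n * (W ^ n * (2 * ε ^ b))) := by
    intro k
    induction k with
    | zero =>
      intro _ y hy
      rw [show ((0:ℕ):ℝ) * s = 0 by simp]
      have h0 : (fun z => f ε (hypRot i j 0 z) - f ε z) = fun z => f ε z - f ε z := by
        funext z; rw [hypRot_zero]
      rw [h0, itFD_sub hfε hfε n y, sub_self]
      simp
    | succ k ih =>
      intro hk y hy
      have hk' : k ≤ R := Nat.le_of_succ_le hk
      have e1 : ((k+1:ℕ):ℝ) * s = s + (k:ℝ) * s := by push_cast; ring
      rw [e1]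
      have hfun : (fun z => f ε (hypRot i j (s + (k:ℝ) * s) z) - f ε z)
          = (fun z => (fun w => f ε (hypRot i j s w) - f ε w) (hypRot i j ((k:ℝ) * s) z))
            + fun z => f ε (hypRot i j ((k:ℝ) * s) z) - f ε z := by
        funext z
        simp only [Pi.add_apply]
        rw [hypRot_add hne s ((k:ℝ) * s) z]
        ring
      rw [hfun]
      have hsm1 : ContDiff ℝ (⊤ : ℕ∞) (fun z =>
          (fun w => f ε (hypRot i j s w) - f ε w) (hypRot i j ((k:ℝ) * s) z)) :=
        contDiff_comp_hypRot ((contDiff_comp_hypRot hfε s).sub hfε) ((k:ℝ) * s)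
      have hsm2 : ContDiff ℝ (⊤ : ℕ∞) (fun z => f ε (hypRot i j ((k:ℝ) * s) z) - f ε z) :=
        (contDiff_comp_hypRot hfε ((k:ℝ) * s)).sub hfε
      rw [iteratedFDeriv_add_apply (hsm1.of_le (by exact_mod_cast le_top)).contDiffAt (hsm2.of_le (by exact_mod_cast le_top)).contDiffAt]
      refine (norm_add_le _ _).trans ?_
      have hA1 : ‖hypRotCLM i j ((k:ℝ) * s)‖ ≤ W :=
        hA _ ((hks k hk').trans (by rw [hMdef]; linarith))
      have t1 := itFD_comp_norm (i := i) (j := j) (g := fun w => f ε (hypRot i j s w) - f ε w)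
        ((contDiff_comp_hypRot hfε s).sub hfε) hA1 n y
      have t2 := hsmall s hsη ε hε hεm ((k:ℝ) * s) (hks k hk') y hy
      have t3 := ih hk' y hy
      have t4 : ‖iteratedFDeriv ℝ n (fun z =>
          (fun w => f ε (hypRot i j s w) - f ε w) (hypRot i j ((k:ℝ) * s) z)) y‖
          ≤ W ^ n * (W ^ n * (2 * ε ^ b)) :=
        t1.trans (mul_le_mul_of_nonneg_left t2 (by positivity))
      have e2 : ((k+1:ℕ):ℝ) * (W ^ n * (W ^ n * (2 * ε ^ b)))
          = W ^ n * (W ^ n * (2 * ε ^ b)) + (k:ℝ) * (W ^ n * (W ^ n * (2 * ε ^ b))) := by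
        push_cast; ring
      rw [e2]
      exact add_le_add t4 t3
  have hfinal := hB R le_rfl x hx
  have eR : ((R:ℕ):ℝ) * s = θf ε := by
    rw [hsdef]
    field_simp
  rw [eR] at hfinal
  have hεb : (0:ℝ) ≤ ε ^ b := Real.rpow_nonneg hε.1.le b
  have hWn : (0:ℝ) ≤ W ^ n := by positivity
  calc ‖iteratedFDeriv ℝ n (fun z => f ε (hypRot i j (θf ε) z) - f ε z) x‖
      ≤ (R:ℝ) * (W ^ n * (W ^ n * (2 * ε ^ b))) := hfinal
    _ = ((R:ℝ) * (W ^ n * (W ^ n * 2))) * ε ^ b := by ring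
    _ ≤ ((R:ℝ) * (W ^ n * (W ^ n * 2)) + 1) * ε ^ b := by nlinarith
end

section
/- Let (f_ε)_{ε∈(0,1)} be a moderate net of smooth functions ℝ^d → ℂ. Suppose that for every fixed R ∈ SO(d,ℝ) the net (x ↦ f_ε(R x) − f_ε(x))_ε is negligible. Then for every family (R_ε)_{ε∈(0,1)} with R_ε ∈ SO(d,ℝ) for each ε, the net (x ↦ f_ε(R_ε x) − f_ε(x))_ε is negligible. -/
section AuxLemmas

open Metric Set

variable {Eu F : Type*} [NormedAddCommGroup Eu] [NormedSpace ℝ Eu]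
  [NormedAddCommGroup F] [NormedSpace ℝ F]

lemma itFD_sub_s5 {n : ℕ} {p q : Eu → F} (hp : ContDiff ℝ n p) (hq : ContDiff ℝ n q) (x : Eu) :
    iteratedFDeriv ℝ n (fun y => p y - q y) x
      = iteratedFDeriv ℝ n p x - iteratedFDeriv ℝ n q x := by
  have hq' : ContDiff ℝ n (-q) := hq.neg
  have h : (fun y => p y - q y) = p + (-q) := by funext y; simp [sub_eq_add_neg]
  rw [h, iteratedFDeriv_add_apply hp.contDiffAt hq'.contDiffAt, iteratedFDeriv_neg_apply, sub_eq_add_neg]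

lemma compCLM_sub (n : ℕ) (g₁ g₂ : ContinuousMultilinearMap ℝ (fun _ : Fin n => Eu) F)
    (A : Eu →L[ℝ] Eu) :
    (g₁ - g₂).compContinuousLinearMap (fun _ => A)
      = g₁.compContinuousLinearMap (fun _ => A) - g₂.compContinuousLinearMap (fun _ => A) := rfl

lemma compCLM_lip (n : ℕ) (g : ContinuousMultilinearMap ℝ (fun _ : Fin n => Eu) F)
    (A B : Eu →L[ℝ] Eu) :
    ‖g.compContinuousLinearMap (fun _ => A) - g.compContinuousLinearMap (fun _ => B)‖
      ≤ ‖g‖ * (n * max ‖A‖ ‖B‖ ^ (n - 1) * ‖A - B‖) := by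
  classical
  set c : ℝ := max ‖A‖ ‖B‖ with hc
  have hc0 : 0 ≤ c := le_max_of_le_left (norm_nonneg _)
  apply ContinuousMultilinearMap.opNorm_le_bound (by positivity)
  intro m
  have happ : (g.compContinuousLinearMap (fun _ => A)
        - g.compContinuousLinearMap (fun _ => B)) m
      = g (fun i => A (m i)) - g (fun i => B (m i)) := rfl
  rw [happ]
  have key := g.norm_image_sub_le' (fun i => A (m i)) (fun i => B (m i))
  refine key.trans ?_
  have hstep : ∀ i : Fin n,
      (∏ j, if j = i then ‖A (m i) - B (m i)‖ else max ‖A (m j)‖ ‖B (m j)‖)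
        ≤ (‖A - B‖ * c ^ (n - 1)) * ∏ j, ‖m j‖ := by
    intro i
    have h1 : (∏ j, if j = i then ‖A (m i) - B (m i)‖ else max ‖A (m j)‖ ‖B (m j)‖)
        ≤ ∏ j, ((if j = i then ‖A - B‖ else c) * ‖m j‖) := by
      apply Finset.prod_le_prod
      · intro j _
        split <;> positivity
      · intro j _
        by_cases hj : j = i
        · subst hj
          simp only [if_pos rfl]
          calc ‖A (m j) - B (m j)‖ = ‖(A - B) (m j)‖ := by rw [ContinuousLinearMap.sub_apply]
            _ ≤ ‖A - B‖ * ‖m j‖ := ContinuousLinearMap.le_opNorm _ _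
        · simp only [if_neg hj]
          apply max_le
          · exact (A.le_opNorm _).trans (by gcongr; exact le_max_left _ _)
          · exact (B.le_opNorm _).trans (by gcongr; exact le_max_right _ _)
    refine h1.trans (le_of_eq ?_)
    have h3 : (∏ j : Fin n, (if j = i then ‖A - B‖ else c)) = ‖A - B‖ * c ^ (n - 1) := by
      have h4 := Finset.mul_prod_erase Finset.univ
        (fun j => if j = i then ‖A - B‖ else c) (Finset.mem_univ i)
      have h2 : ∏ j ∈ Finset.univ.erase i, (if j = i then ‖A - B‖ else c)
          = c ^ (n - 1) := by
        rw [Finset.prod_congr rfl (fun j hj => if_neg (Finset.mem_erase.mp hj).1),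
          Finset.prod_const, Finset.card_erase_of_mem (Finset.mem_univ i)]
        simp
      rw [← h4]
      simp [h2]
    rw [Finset.prod_mul_distrib, h3]
  calc ‖g‖ * ∑ i, ∏ j, (if j = i then ‖A (m i) - B (m i)‖ else max ‖A (m j)‖ ‖B (m j)‖)
      ≤ ‖g‖ * ∑ _i : Fin n, ((‖A - B‖ * c ^ (n - 1)) * ∏ j, ‖m j‖) :=
        mul_le_mul_of_nonneg_left (Finset.sum_le_sum fun i _ => hstep i) (norm_nonneg g)
    _ = ‖g‖ * (↑n * c ^ (n - 1) * ‖A - B‖) * ∏ j, ‖m j‖ := by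
        rw [Finset.sum_const, Finset.card_univ, Fintype.card_fin, nsmul_eq_mul]
        ring

noncomputable def Phi (d : ℕ) :
    Matrix (Fin d) (Fin d) ℝ →ₗ[ℝ] ((Fin d → ℝ) →L[ℝ] (Fin d → ℝ)) where
  toFun M := LinearMap.toContinuousLinearMap (Matrix.mulVecLin M)
  map_add' M N := by ext v; simp [Matrix.add_mulVec]
  map_smul' c M := by ext v; simp [Matrix.smul_mulVec]

lemma Phi_apply {d : ℕ} (M : Matrix (Fin d) (Fin d) ℝ) (x : Fin d → ℝ) :
    Phi d M x = M.mulVec x := rfl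

lemma Phi_continuous (d : ℕ) : Continuous (Phi d) :=
  LinearMap.continuous_of_finiteDimensional _

lemma SO_compact (d : ℕ) :
    IsCompact {M : Matrix (Fin d) (Fin d) ℝ | M.transpose * M = 1 ∧ M.det = 1} := by
  have hB : IsCompact ((Set.pi Set.univ (fun _ : Fin d => Set.pi Set.univ fun _ : Fin d =>
      Icc (-1:ℝ) 1)) : Set (Matrix (Fin d) (Fin d) ℝ)) :=
    isCompact_univ_pi fun _ => isCompact_univ_pi fun _ => isCompact_Icc
  apply hB.of_isClosed_subset
  · apply IsClosed.inter
    · exact isClosed_eq ((continuous_id.matrix_transpose).matrix_mul continuous_id)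
        continuous_const
    · exact isClosed_eq (continuous_id.matrix_det) continuous_const
  · rintro M ⟨hM, -⟩
    rw [Set.mem_univ_pi]
    intro i
    rw [Set.mem_univ_pi]
    intro j
    rw [Set.mem_Icc]
    have hdiag : ∑ k, M k j * M k j = 1 := by
      have := congrFun (congrFun hM j) j
      change (Matrix.transpose (show Matrix (Fin d) (Fin d) ℝ from M) * (show Matrix (Fin d) (Fin d) ℝ from M)) j j
        = (1 : Matrix (Fin d) (Fin d) ℝ) j j at this
      rw [Matrix.mul_apply, Matrix.one_apply_eq] at this
      exact this
    have hle : M i j * M i j ≤ 1 := by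
      rw [← hdiag]
      exact Finset.single_le_sum (fun k _ => mul_self_nonneg (M k j)) (Finset.mem_univ i)
    have : |M i j| ≤ 1 := by nlinarith [abs_nonneg (M i j), sq_abs (M i j)]
    exact abs_le.mp this

end AuxLemmas

set_option maxHeartbeats 2000000 in
/-- A Colombeau generalized function invariant under all classical rotations of `ℝ^d`
is invariant under all generalized rotations. -/
theorem invariance_generalized_rotations {d : ℕ}
    (f : ℝ → (Fin d → ℝ) → ℂ)
    (hf_smooth : ∀ ε ∈ Set.Ioo (0 : ℝ) 1, ContDiff ℝ (⊤ : ℕ∞) (f ε))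
    (hf_mod : Moderate f)
    (hf_inv : ∀ R : Matrix (Fin d) (Fin d) ℝ, R.transpose * R = 1 → R.det = 1 →
      Negligible (fun ε x => f ε (R.mulVec x) - f ε x)) :
    ∀ R : ℝ → Matrix (Fin d) (Fin d) ℝ,
      (∀ ε ∈ Set.Ioo (0 : ℝ) 1, (R ε).transpose * R ε = 1 ∧ (R ε).det = 1) →
      Negligible (fun ε x => f ε ((R ε).mulVec x) - f ε x) := by
  classical
  intro R hR K hK n b
  open Metric Set in
  -- radius of K
  obtain ⟨r₀, hr₀⟩ := hK.isBounded.subset_closedBall (0 : Fin d → ℝ)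
  set r : ℝ := max r₀ 1 with hrdef
  have hr1 : (1:ℝ) ≤ r := le_max_right _ _
  have hr0 : (0:ℝ) < r := lt_of_lt_of_le one_pos hr1
  have hKr : ∀ x ∈ K, ‖x‖ ≤ r := fun x hx =>
    le_trans (mem_closedBall_zero_iff.mp (hr₀ hx)) (le_max_left _ _)
  -- the compact set of generalized rotation operators
  set SOd : Set (Matrix (Fin d) (Fin d) ℝ) :=
    {M : Matrix (Fin d) (Fin d) ℝ | M.transpose * M = 1 ∧ M.det = 1} with hSOddef
  set 𝒮 : Set ((Fin d → ℝ) →L[ℝ] (Fin d → ℝ)) := Phi d '' SOd with h𝒮def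
  have h𝒮c : IsCompact 𝒮 := (SO_compact d).image (Phi_continuous d)
  obtain ⟨Λ₀, hΛ₀⟩ := h𝒮c.isBounded.subset_closedBall 0
  set Λ : ℝ := max Λ₀ 1 with hΛdef
  have hΛ1 : (1:ℝ) ≤ Λ := le_max_right _ _
  have hΛ0 : (0:ℝ) < Λ := lt_of_lt_of_le one_pos hΛ1
  have hΛ : ∀ A ∈ 𝒮, ‖A‖ ≤ Λ := fun A hA =>
    le_trans (mem_closedBall_zero_iff.mp (hΛ₀ hA)) (le_max_left _ _)
  -- the enlarged compact set
  set K' : Set (Fin d → ℝ) := closedBall 0 (Λ * r) with hK'def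
  have hK'c : IsCompact K' := isCompact_closedBall _ _
  have hmemK' : ∀ A ∈ 𝒮, ∀ x ∈ K, A x ∈ K' := by
    intro A hA x hx
    rw [hK'def, mem_closedBall_zero_iff]
    calc ‖A x‖ ≤ ‖A‖ * ‖x‖ := A.le_opNorm x
      _ ≤ Λ * r := mul_le_mul (hΛ A hA) (hKr x hx) (norm_nonneg x) (le_of_lt hΛ0)
  -- continuity of the iterated derivative in the operator variable
  have hcont : ∀ ε ∈ Set.Ioo (0:ℝ) 1, ∀ x : Fin d → ℝ,
      Continuous fun A : (Fin d → ℝ) →L[ℝ] (Fin d → ℝ) =>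
        iteratedFDeriv ℝ n (fun y => f ε (A y)) x := by
    intro ε hε x
    have hfS := hf_smooth ε hε
    have hDcont : Continuous (iteratedFDeriv ℝ n (f ε)) :=
      hfS.continuous_iteratedFDeriv (by exact_mod_cast le_top)
    have hFeq : ∀ A : (Fin d → ℝ) →L[ℝ] (Fin d → ℝ),
        iteratedFDeriv ℝ n (fun y => f ε (A y)) x
          = (iteratedFDeriv ℝ n (f ε) (A x)).compContinuousLinearMap (fun _ => A) := by
      intro A
      rw [show (fun y => f ε (A y)) = f ε ∘ A from rfl]
      exact A.iteratedFDeriv_comp_right hfS x (by exact_mod_cast le_top)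
    have hev : Continuous fun A : (Fin d → ℝ) →L[ℝ] (Fin d → ℝ) => A x := by
      have := (isBoundedBilinearMap_apply
        (𝕜 := ℝ) (E := Fin d → ℝ) (F := Fin d → ℝ)).continuous
      exact this.comp (continuous_id.prodMk continuous_const)
    rw [continuous_iff_continuousAt]
    intro A₀
    set G : ((Fin d → ℝ) →L[ℝ] (Fin d → ℝ)) → ℝ := fun A =>
      ‖iteratedFDeriv ℝ n (f ε) (A x) - iteratedFDeriv ℝ n (f ε) (A₀ x)‖ * ‖A‖^n
        + ‖iteratedFDeriv ℝ n (f ε) (A₀ x)‖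
          * ((n:ℝ) * max ‖A‖ ‖A₀‖^(n-1) * ‖A - A₀‖) with hGdef
    have hGcont : Continuous G := by
      apply Continuous.add
      · exact (((hDcont.comp hev).sub continuous_const).norm).mul (continuous_norm.pow n)
      · exact continuous_const.mul
          ((continuous_const.mul ((continuous_norm.max continuous_const).pow (n-1))).mul
            ((continuous_id.sub continuous_const).norm))
    have hG0 : G A₀ = 0 := by simp [hGdef]
    have hGt : Filter.Tendsto G (nhds A₀) (nhds 0) := by
      have := hGcont.tendsto A₀
      rwa [hG0] at this
    rw [ContinuousAt, tendsto_iff_norm_sub_tendsto_zero]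
    apply squeeze_zero (fun A => norm_nonneg _) ?_ hGt
    intro A
    rw [hFeq A, hFeq A₀]
    set D1 := iteratedFDeriv ℝ n (f ε) (A x) with hD1
    set D2 := iteratedFDeriv ℝ n (f ε) (A₀ x) with hD2
    have hid : D1.compContinuousLinearMap (fun _ => A)
          - D2.compContinuousLinearMap (fun _ => A₀)
        = ((D1 - D2).compContinuousLinearMap (fun _ => A))
          + (D2.compContinuousLinearMap (fun _ => A)
              - D2.compContinuousLinearMap (fun _ => A₀)) := by
      rw [compCLM_sub]; abel
    rw [hid]
    refine (norm_add_le _ _).trans (add_le_add ?_ ?_)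
    · refine (ContinuousMultilinearMap.norm_compContinuousLinearMap_le _ _).trans ?_
      rw [show (∏ _i : Fin n, ‖A‖) = ‖A‖^n by simp]
    · exact compCLM_lip n D2 A A₀
  -- the closed sets for the Baire argument
  haveI : CompactSpace ↥𝒮 := isCompact_iff_compactSpace.mp h𝒮c
  haveI : Nonempty ↥𝒮 := ⟨⟨Phi d 1, ⟨1, ⟨by simp, by simp⟩, rfl⟩⟩⟩
  set U : ℕ → Set ↥𝒮 := fun N => {A : ↥𝒮 | ∀ ε ∈ Set.Ioo (0:ℝ) 1, ε < ((N:ℝ)+1)⁻¹ →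
    ∀ x ∈ K, ‖iteratedFDeriv ℝ n
      (fun y => f ε ((A : (Fin d → ℝ) →L[ℝ] (Fin d → ℝ)) y) - f ε y) x‖
        ≤ ((N:ℝ)+1) * ε ^ b} with hUdef
  have hUclosed : ∀ N, IsClosed (U N) := by
    intro N
    have hrepr : U N = ⋂ (ε : ℝ) (_ : ε ∈ Set.Ioo (0:ℝ) 1 ∧ ε < ((N:ℝ)+1)⁻¹)
        (x : Fin d → ℝ) (_ : x ∈ K),
        {A : ↥𝒮 | ‖iteratedFDeriv ℝ n
          (fun y => f ε ((A : (Fin d → ℝ) →L[ℝ] (Fin d → ℝ)) y) - f ε y) x‖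
            ≤ ((N:ℝ)+1) * ε ^ b} := by
      ext A
      simp only [hUdef, Set.mem_setOf_eq, Set.mem_iInter]
      exact ⟨fun h ε hε x hx => h ε hε.1 hε.2 x hx,
        fun h ε hε hεN x hx => h ε ⟨hε, hεN⟩ x hx⟩
    rw [hrepr]
    refine isClosed_iInter fun ε => isClosed_iInter fun hε =>
      isClosed_iInter fun x => isClosed_iInter fun _ => ?_
    have hfn : ContDiff ℝ n (f ε) := (hf_smooth ε hε.1).of_le (by exact_mod_cast le_top)
    have hset : {A : ↥𝒮 | ‖iteratedFDeriv ℝ n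
          (fun y => f ε ((A : (Fin d → ℝ) →L[ℝ] (Fin d → ℝ)) y) - f ε y) x‖
            ≤ ((N:ℝ)+1) * ε ^ b}
        = {A : ↥𝒮 | ‖iteratedFDeriv ℝ n
            (fun y => f ε ((A : (Fin d → ℝ) →L[ℝ] (Fin d → ℝ)) y)) x
              - iteratedFDeriv ℝ n (f ε) x‖ ≤ ((N:ℝ)+1) * ε ^ b} := by
      ext A
      have := itFD_sub_s5 (n := n)
        (p := fun y => f ε ((A : (Fin d → ℝ) →L[ℝ] (Fin d → ℝ)) y)) (q := f ε)
        (hfn.comp (A : (Fin d → ℝ) →L[ℝ] (Fin d → ℝ)).contDiff) hfn x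
      simp only [Set.mem_setOf_eq, this]
    rw [hset]
    apply isClosed_le _ continuous_const
    exact (((hcont ε hε.1 x).comp continuous_subtype_val).sub continuous_const).norm
  have hUcover : (⋃ N, U N) = Set.univ := by
    rw [Set.eq_univ_iff_forall]
    intro A
    obtain ⟨M, hM, hΦM⟩ := A.2
    obtain ⟨C, hC, η, hη, hbd⟩ := hf_inv M hM.1 hM.2 K hK n b
    obtain ⟨N, hN⟩ := exists_nat_ge (max C η⁻¹)
    refine Set.mem_iUnion.mpr ⟨N, ?_⟩
    intro ε hε hεN x hx
    have hCN : C ≤ (N:ℝ)+1 := le_trans (le_max_left _ _) (by linarith)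
    have hηN : ((N:ℝ)+1)⁻¹ ≤ η := by
      rw [inv_le_comm₀ (by positivity) hη]
      exact le_trans (le_max_right _ _) (by linarith)
    have hεη : ε < η := lt_of_lt_of_le hεN hηN
    have hfuneq : (fun y => f ε ((A : (Fin d → ℝ) →L[ℝ] (Fin d → ℝ)) y) - f ε y)
        = (fun y => f ε (M.mulVec y) - f ε y) := by
      funext y
      rw [← hΦM, Phi_apply]
    rw [hfuneq]
    exact le_trans (hbd ε hε hεη x hx)
      (mul_le_mul_of_nonneg_right hCN (le_of_lt (Real.rpow_pos_of_pos hε.1 b)))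
  -- Baire category
  obtain ⟨N₀, hN₀⟩ := nonempty_interior_of_iUnion_of_closed hUclosed hUcover
  obtain ⟨Astar, hAstar⟩ := hN₀
  obtain ⟨ρ, hρ, hball⟩ := Metric.isOpen_iff.mp isOpen_interior Astar hAstar
  have hballU : Metric.ball Astar ρ ⊆ U N₀ := hball.trans interior_subset
  obtain ⟨Mstar, hMstar, hΦMstar⟩ := Astar.2
  -- group-translation covering of SO(d)
  have hSOmul : ∀ M1 ∈ SOd, ∀ M2 ∈ SOd, M1 * M2 ∈ SOd := by
    rintro M1 ⟨h1, h1d⟩ M2 ⟨h2, h2d⟩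
    constructor
    · rw [Matrix.transpose_mul]
      calc M2.transpose * M1.transpose * (M1 * M2)
          = M2.transpose * (M1.transpose * M1) * M2 := by
            rw [Matrix.mul_assoc, Matrix.mul_assoc, Matrix.mul_assoc]
        _ = 1 := by rw [h1, mul_one, h2]
    · rw [Matrix.det_mul, h1d, h2d, mul_one]
  have hSOtrans : ∀ M ∈ SOd, M.transpose ∈ SOd := by
    rintro M ⟨h1, h1d⟩
    constructor
    · rw [Matrix.transpose_transpose]
      exact mul_eq_one_comm.mp h1
    · rw [Matrix.det_transpose]; exact h1d
  set O : ↥SOd → Set (Matrix (Fin d) (Fin d) ℝ) := fun S =>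
    {M : Matrix (Fin d) (Fin d) ℝ |
      ‖Phi d ((S : Matrix (Fin d) (Fin d) ℝ).transpose * M)
        - (Astar : (Fin d → ℝ) →L[ℝ] (Fin d → ℝ))‖ < ρ} with hOdef
  have hOopen : ∀ S, IsOpen (O S) := by
    intro S
    have hco : Continuous fun M : Matrix (Fin d) (Fin d) ℝ =>
        ‖Phi d ((S : Matrix (Fin d) (Fin d) ℝ).transpose * M)
          - (Astar : (Fin d → ℝ) →L[ℝ] (Fin d → ℝ))‖ :=
      (((Phi_continuous d).comp (continuous_const.matrix_mul continuous_id)).sub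
        continuous_const).norm
    exact isOpen_lt hco continuous_const
  have hOcover : SOd ⊆ ⋃ S : ↥SOd, O S := by
    intro M hM
    have hS : M * Mstar.transpose ∈ SOd := hSOmul M hM Mstar.transpose (hSOtrans Mstar hMstar)
    refine Set.mem_iUnion.mpr ⟨⟨M * Mstar.transpose, hS⟩, ?_⟩
    have hcomp : (M * Mstar.transpose).transpose * M = Mstar := by
      rw [Matrix.transpose_mul, Matrix.transpose_transpose, Matrix.mul_assoc, hM.1, mul_one]
    simp only [hOdef, Set.mem_setOf_eq, hcomp, hΦMstar, sub_self, norm_zero]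
    exact hρ
  obtain ⟨t, ht⟩ := (SO_compact d).elim_finite_subcover O hOopen hOcover
  -- negligibility data at the finitely many translates
  have hchS : ∀ S : ↥SOd, ∃ C > (0:ℝ), ∃ η > (0:ℝ), ∀ ε ∈ Set.Ioo (0:ℝ) 1, ε < η →
      ∀ z ∈ K', ‖iteratedFDeriv ℝ n
        (fun y => f ε ((S : Matrix (Fin d) (Fin d) ℝ).mulVec y) - f ε y) z‖
          ≤ C * ε ^ b := fun S => hf_inv S S.2.1 S.2.2 K' hK'c n b
  choose CS hCS ηS hηS hbdS using hchS
  set Cmax : ℝ := if h : t.Nonempty then t.sup' h CS else 1 with hCmaxdef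
  set ηmin : ℝ := if h : t.Nonempty then t.inf' h ηS else 1 with hηmindef
  have hCmax_nonneg : 0 ≤ Cmax := by
    rw [hCmaxdef]
    split
    · next h =>
      obtain ⟨S, hS⟩ := h
      exact le_trans (le_of_lt (hCS S)) (Finset.le_sup' CS hS)
    · exact zero_le_one
  have hηmin_pos : 0 < ηmin := by
    rw [hηmindef]
    split
    · next h => exact (Finset.lt_inf'_iff h).mpr fun S _ => hηS S
    · exact one_pos
  refine ⟨Cmax * Λ^n + ((N₀:ℝ)+1), by positivity, min ηmin ((N₀:ℝ)+1)⁻¹,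
    lt_min hηmin_pos (by positivity), ?_⟩
  intro ε hε hεm x hx
  have hε1 : (0:ℝ) < ε := hε.1
  have hRε : R ε ∈ SOd := ⟨(hR ε hε).1, (hR ε hε).2⟩
  obtain ⟨S, hSt, hMO⟩ := Set.mem_iUnion₂.mp (ht hRε)
  have hQnorm : ‖Phi d ((S : Matrix (Fin d) (Fin d) ℝ).transpose * R ε)
      - (Astar : (Fin d → ℝ) →L[ℝ] (Fin d → ℝ))‖ < ρ := hMO
  set Q : Matrix (Fin d) (Fin d) ℝ := (S : Matrix (Fin d) (Fin d) ℝ).transpose * R ε with hQdef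
  have hQSO : Q ∈ SOd := hSOmul _ (hSOtrans S S.2) _ hRε
  have hSQ : (S : Matrix (Fin d) (Fin d) ℝ) * Q = R ε := by
    rw [hQdef, ← Matrix.mul_assoc, mul_eq_one_comm.mp S.2.1, Matrix.one_mul]
  -- the ball membership gives the uniform bound at Q
  have haU : (⟨Phi d Q, ⟨Q, hQSO, rfl⟩⟩ : ↥𝒮) ∈ U N₀ := by
    apply hballU
    rw [Metric.mem_ball, Subtype.dist_eq, dist_eq_norm]
    exact hQnorm
  have hεN₀ : ε < ((N₀:ℝ)+1)⁻¹ := lt_of_lt_of_le hεm (min_le_right _ _)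
  have hQbound := haU ε hε hεN₀ x hx
  -- decompose  f ε ((R ε) y) - f ε y
  have hfS := hf_smooth ε hε
  have hfn : ContDiff ℝ n (f ε) := hfS.of_le (by exact_mod_cast le_top)
  have hPhiQ : ∀ y, Phi d Q y = Q.mulVec y := fun y => Phi_apply Q y
  set gS : (Fin d → ℝ) → ℂ :=
    fun z => f ε ((S : Matrix (Fin d) (Fin d) ℝ).mulVec z) - f ε z with hgSdef
  have hdecomp : (fun y => f ε ((R ε).mulVec y) - f ε y)
      = (fun y => gS (Phi d Q y)) + (fun y => f ε (Phi d Q y) - f ε y) := by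
    funext y
    simp only [hgSdef, Pi.add_apply, hPhiQ]
    rw [Matrix.mulVec_mulVec, hSQ]
    ring
  have hgSsmooth : ContDiff ℝ n gS := by
    have h1 : ContDiff ℝ n fun z => f ε ((S : Matrix (Fin d) (Fin d) ℝ).mulVec z) := by
      have : (fun z => f ε ((S : Matrix (Fin d) (Fin d) ℝ).mulVec z))
          = fun z => f ε (Phi d (S : Matrix (Fin d) (Fin d) ℝ) z) := by
        funext z; rw [Phi_apply]
      rw [this]
      exact hfn.comp (Phi d (S : Matrix (Fin d) (Fin d) ℝ)).contDiff
    exact h1.sub hfn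
  have hgSQsmooth : ContDiff ℝ n fun y => gS (Phi d Q y) :=
    hgSsmooth.comp (Phi d Q).contDiff
  have hQdiffsmooth : ContDiff ℝ n fun y => f ε (Phi d Q y) - f ε y :=
    (hfn.comp (Phi d Q).contDiff).sub hfn
  rw [show ((fun (ε : ℝ) (x : Fin d → ℝ) => f ε ((R ε).mulVec x) - f ε x) ε)
      = (fun y => f ε ((R ε).mulVec y) - f ε y) from rfl]
  rw [hdecomp, iteratedFDeriv_add_apply hgSQsmooth.contDiffAt hQdiffsmooth.contDiffAt]
  refine (norm_add_le _ _).trans ?_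
  -- first piece : composition with the fixed rotation S
  have hQmem : Phi d Q ∈ 𝒮 := ⟨Q, hQSO, rfl⟩
  have hQx : Phi d Q x ∈ K' := hmemK' (Phi d Q) hQmem x hx
  have hcomp1 : iteratedFDeriv ℝ n (fun y => gS (Phi d Q y)) x
      = (iteratedFDeriv ℝ n gS (Phi d Q x)).compContinuousLinearMap
          (fun _ => Phi d Q) := by
    rw [show (fun y => gS (Phi d Q y)) = gS ∘ (Phi d Q) from rfl]
    exact (Phi d Q).iteratedFDeriv_comp_right hgSsmooth x le_rfl
  have hεηS : ε < ηS S := lt_of_lt_of_le hεm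
    (le_trans (min_le_left _ _) (by
      rw [hηmindef, dif_pos ⟨S, hSt⟩]
      exact Finset.inf'_le _ hSt))
  have hgSbound : ‖iteratedFDeriv ℝ n gS (Phi d Q x)‖ ≤ CS S * ε ^ b :=
    hbdS S ε hε hεηS _ hQx
  have hfirst : ‖iteratedFDeriv ℝ n (fun y => gS (Phi d Q y)) x‖
      ≤ Cmax * Λ^n * ε ^ b := by
    rw [hcomp1]
    refine (ContinuousMultilinearMap.norm_compContinuousLinearMap_le _ _).trans ?_
    rw [show (∏ _i : Fin n, ‖Phi d Q‖) = ‖Phi d Q‖^n by simp]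
    have h1 : ‖Phi d Q‖^n ≤ Λ^n := pow_le_pow_left₀ (norm_nonneg _) (hΛ _ hQmem) n
    have h2 : CS S ≤ Cmax := by
      rw [hCmaxdef, dif_pos ⟨S, hSt⟩]
      exact Finset.le_sup' CS hSt
    calc ‖iteratedFDeriv ℝ n gS (Phi d Q x)‖ * ‖Phi d Q‖^n
        ≤ (CS S * ε ^ b) * Λ^n := mul_le_mul hgSbound h1 (by positivity)
          (mul_nonneg (le_of_lt (hCS S)) (le_of_lt (Real.rpow_pos_of_pos hε1 b)))
      _ ≤ (Cmax * ε ^ b) * Λ^n :=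
          mul_le_mul_of_nonneg_right
            (mul_le_mul_of_nonneg_right h2 (le_of_lt (Real.rpow_pos_of_pos hε1 b)))
            (le_of_lt (pow_pos hΛ0 n))
      _ = Cmax * Λ^n * ε ^ b := by ring
  -- second piece : the ball bound
  have hsecond : ‖iteratedFDeriv ℝ n (fun y => f ε (Phi d Q y) - f ε y) x‖
      ≤ ((N₀:ℝ)+1) * ε ^ b := hQbound
  calc ‖iteratedFDeriv ℝ n (fun y => gS (Phi d Q y)) x‖
        + ‖iteratedFDeriv ℝ n (fun y => f ε (Phi d Q y) - f ε y) x‖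
      ≤ Cmax * Λ^n * ε ^ b + ((N₀:ℝ)+1) * ε ^ b := add_le_add hfirst hsecond
    _ = (Cmax * Λ^n + ((N₀:ℝ)+1)) * ε ^ b := by ring
end

section
/- Let (f_ε)_{ε∈(0,1)} be a moderate net of smooth functions ℝ^d → ℂ. Suppose that for every fixed A ∈ O(d,ℝ) the net (x ↦ f_ε(A x) − f_ε(x))_ε is negligible. Then for every family (A_ε)_{ε∈(0,1)} with A_ε ∈ O(d,ℝ) for each ε, the net (x ↦ f_ε(A_ε x) − f_ε(x))_ε is negligible. -/
open Set Matrix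

namespace OrthInvAux

variable {d : ℕ}

/-- `mulVec` as a continuous linear map. -/
noncomputable def L (A : Matrix (Fin d) (Fin d) ℝ) : (Fin d → ℝ) →L[ℝ] (Fin d → ℝ) :=
  LinearMap.toContinuousLinearMap (Matrix.mulVecLin A)

@[simp] lemma L_apply (A : Matrix (Fin d) (Fin d) ℝ) (x : Fin d → ℝ) : L A x = A.mulVec x := rfl

lemma continuous_L : Continuous (fun A : Matrix (Fin d) (Fin d) ℝ => L A) := by
  let Φ : Matrix (Fin d) (Fin d) ℝ →ₗ[ℝ] ((Fin d → ℝ) →L[ℝ] (Fin d → ℝ)) :=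
    { toFun := L
      map_add' := fun A B => by ext x; simp [Matrix.add_mulVec]
      map_smul' := fun c A => by ext x; simp [Matrix.smul_mulVec] }
  exact Φ.continuous_of_finiteDimensional

lemma entry_abs_le {A : Matrix (Fin d) (Fin d) ℝ} (hA : Aᵀ * A = 1) (i j : Fin d) :
    |A i j| ≤ 1 := by
  have h1 : (Aᵀ * A) j j = 1 := by rw [hA]; simp
  rw [Matrix.mul_apply] at h1
  simp only [Matrix.transpose_apply] at h1
  have h2 : A i j * A i j ≤ ∑ k, A k j * A k j :=
    Finset.single_le_sum (f := fun k => A k j * A k j) (fun k _ => mul_self_nonneg _)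
      (Finset.mem_univ i)
  rw [h1] at h2
  exact abs_le_one_iff_mul_self_le_one.2 h2

lemma norm_L_le {A : Matrix (Fin d) (Fin d) ℝ} (hA : Aᵀ * A = 1) : ‖L A‖ ≤ (d : ℝ) := by
  refine ContinuousLinearMap.opNorm_le_bound _ (by positivity) fun x => ?_
  rw [L_apply]
  refine (pi_norm_le_iff_of_nonneg (by positivity)).2 fun i => ?_
  have : A.mulVec x i = ∑ j, A i j * x j := by
    simp [Matrix.mulVec, dotProduct]
  rw [Real.norm_eq_abs, this]
  calc |∑ j, A i j * x j| ≤ ∑ j, |A i j * x j| := Finset.abs_sum_le_sum_abs _ _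
    _ ≤ ∑ _j : Fin d, ‖x‖ := by
        refine Finset.sum_le_sum fun j _ => ?_
        rw [abs_mul]
        calc |A i j| * |x j| ≤ 1 * ‖x‖ := by
              refine mul_le_mul (entry_abs_le hA i j) ?_ (abs_nonneg _) zero_le_one
              simpa [Real.norm_eq_abs] using norm_le_pi_norm x j
          _ = ‖x‖ := one_mul _
    _ = (d : ℝ) * ‖x‖ := by simp [Finset.sum_const, mul_comm]

/-- Euclidean ball of squared radius `R`. -/
def ball2 (d : ℕ) (R : ℝ) : Set (Fin d → ℝ) := {x | ∑ i, x i * x i ≤ R}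

lemma isCompact_ball2 (R : ℝ) : IsCompact (ball2 d R) := by
  have hclosed : IsClosed (ball2 d R) := by
    refine isClosed_le ?_ continuous_const
    exact continuous_finset_sum _ fun i _ => (continuous_apply i).mul (continuous_apply i)
  have hsub : ball2 d R ⊆ Metric.closedBall 0 (Real.sqrt (max R 0)) := by
    intro x hx
    rw [Metric.mem_closedBall, dist_zero_right]
    refine (pi_norm_le_iff_of_nonneg (Real.sqrt_nonneg _)).2 fun i => ?_
    rw [Real.norm_eq_abs, ← Real.sqrt_sq_eq_abs]
    refine Real.sqrt_le_sqrt ?_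
    have h2 : x i * x i ≤ ∑ k, x k * x k :=
      Finset.single_le_sum (f := fun k => x k * x k) (fun k _ => mul_self_nonneg _)
        (Finset.mem_univ i)
    have := le_trans h2 hx
    nlinarith [le_max_left R 0, le_max_right R (0:ℝ)]
  exact (isCompact_closedBall _ _).of_isClosed_subset hclosed hsub

lemma mulVec_mem_ball2 {A : Matrix (Fin d) (Fin d) ℝ} (hA : Aᵀ * A = 1) {R : ℝ}
    {x : Fin d → ℝ} (hx : x ∈ ball2 d R) : A.mulVec x ∈ ball2 d R := by
  have key : ∑ i, A.mulVec x i * A.mulVec x i = ∑ i, x i * x i := by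
    have h1 : dotProduct (A.mulVec x) (A.mulVec x) = dotProduct x x := by
      rw [Matrix.dotProduct_mulVec, ← Matrix.mulVec_transpose, Matrix.mulVec_mulVec, hA,
        Matrix.one_mulVec]
    simpa [dotProduct] using h1
  simpa [ball2, key] using hx

lemma exists_ball2 {K : Set (Fin d → ℝ)} (hK : IsCompact K) : ∃ R : ℝ, K ⊆ ball2 d R := by
  obtain ⟨r, hr⟩ := hK.isBounded.subset_closedBall 0
  refine ⟨(d : ℝ) * (max r 0) ^ 2, fun x hx => ?_⟩
  have hxr : ‖x‖ ≤ max r 0 := by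
    have := hr hx
    rw [Metric.mem_closedBall, dist_zero_right] at this
    exact this.trans (le_max_left _ _)
  have hbound : ∀ i, x i * x i ≤ (max r 0) ^ 2 := by
    intro i
    have h1 : |x i| ≤ max r 0 := by
      simpa [Real.norm_eq_abs] using (norm_le_pi_norm x i).trans hxr
    nlinarith [abs_nonneg (x i), neg_abs_le (x i), le_abs_self (x i)]
  calc ∑ i, x i * x i ≤ ∑ _i : Fin d, (max r 0)^2 := Finset.sum_le_sum fun i _ => hbound i
    _ = (d : ℝ) * (max r 0) ^ 2 := by simp [Finset.sum_const, mul_comm]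

/-- The orthogonal group as a set of matrices. -/
def Orth (d : ℕ) : Set (Matrix (Fin d) (Fin d) ℝ) := {A | Aᵀ * A = 1}

lemma one_mem_Orth : (1 : Matrix (Fin d) (Fin d) ℝ) ∈ Orth d := by
  simp [Orth]

lemma Orth.mul {A B : Matrix (Fin d) (Fin d) ℝ} (hA : A ∈ Orth d) (hB : B ∈ Orth d) :
    A * B ∈ Orth d := by
  simp only [Orth, mem_setOf_eq, Matrix.transpose_mul] at *
  calc Bᵀ * Aᵀ * (A * B) = Bᵀ * (Aᵀ * A) * B := by
        rw [← mul_assoc, mul_assoc Bᵀ Aᵀ A]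
    _ = Bᵀ * B := by rw [hA, mul_one]
    _ = 1 := hB

lemma Orth.transpose {A : Matrix (Fin d) (Fin d) ℝ} (hA : A ∈ Orth d) : Aᵀ ∈ Orth d := by
  simp only [Orth, mem_setOf_eq, Matrix.transpose_transpose]
  exact mul_eq_one_comm.mp hA

lemma isCompact_Orth : IsCompact (Orth d) := by
  have hclosed : IsClosed (Orth d) := by
    have : Continuous fun A : Matrix (Fin d) (Fin d) ℝ => Aᵀ * A :=
      (continuous_id.matrix_transpose).matrix_mul continuous_id
    exact isClosed_eq this continuous_const
  refine IsCompact.of_isClosed_subset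
    (isCompact_univ_pi fun _ : Fin d => isCompact_univ_pi fun _ : Fin d => isCompact_Icc (a := (-1:ℝ)) (b := 1))
    hclosed ?_
  intro A hA i _ j _
  exact Set.mem_Icc.2 (abs_le.mp (entry_abs_le hA i j))

end OrthInvAux
namespace OrthInvAux

variable {d : ℕ}

lemma iteratedFDeriv_diff {u : (Fin d → ℝ) → ℂ} (hu : ContDiff ℝ (⊤ : ℕ∞) u)
    (A : Matrix (Fin d) (Fin d) ℝ) (n : ℕ) (x : Fin d → ℝ) :
    iteratedFDeriv ℝ n (fun y => u (A.mulVec y) - u y) x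
      = (iteratedFDeriv ℝ n u (A.mulVec x)).compContinuousLinearMap (fun _ => L A)
        - iteratedFDeriv ℝ n u x := by
  have h1 : (fun y => u (A.mulVec y) - u y) = (u ∘ (L A)) + (-u) := by
    funext y; simp [Function.comp, sub_eq_add_neg]
  have hc : ContDiff ℝ (n : ℕ∞) (u ∘ (L A)) :=
    (hu.of_le (by exact_mod_cast le_top)).comp (L A).contDiff
  have hn : ContDiff ℝ (n : ℕ∞) (-u) := (hu.of_le (by exact_mod_cast le_top)).neg
  rw [h1, iteratedFDeriv_add_apply hc.contDiffAt hn.contDiffAt, iteratedFDeriv_neg_apply,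
    (L A).iteratedFDeriv_comp_right hu x (by exact_mod_cast le_top), sub_eq_add_neg]
  rfl

lemma norm_bound {u : (Fin d → ℝ) → ℂ} (hu : ContDiff ℝ (⊤ : ℕ∞) u)
    (A B : Matrix (Fin d) (Fin d) ℝ) (hB : B ∈ Orth d) (n : ℕ) (x : Fin d → ℝ) :
    ‖iteratedFDeriv ℝ n (fun y => u ((A * B).mulVec y) - u y) x‖
      ≤ (d : ℝ) ^ n * ‖iteratedFDeriv ℝ n (fun y => u (A.mulVec y) - u y) (B.mulVec x)‖
        + ‖iteratedFDeriv ℝ n (fun y => u (B.mulVec y) - u y) x‖ := by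
  have hgA : ContDiff ℝ (n : ℕ∞) (fun y => u (A.mulVec y) - u y) :=
    ((hu.of_le (by exact_mod_cast le_top)).comp (L A).contDiff).sub (hu.of_le (by exact_mod_cast le_top))
  have hgB : ContDiff ℝ (n : ℕ∞) (fun y => u (B.mulVec y) - u y) :=
    ((hu.of_le (by exact_mod_cast le_top)).comp (L B).contDiff).sub (hu.of_le (by exact_mod_cast le_top))
  have h1 : (fun y => u ((A * B).mulVec y) - u y)
      = ((fun z => u (A.mulVec z) - u z) ∘ (L B)) + (fun y => u (B.mulVec y) - u y) := by
    funext y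
    simp only [Function.comp_apply, Pi.add_apply, L_apply, ← Matrix.mulVec_mulVec]
    ring
  rw [h1, iteratedFDeriv_add_apply (hgA.comp (L B).contDiff).contDiffAt hgB.contDiffAt]
  refine (norm_add_le _ _).trans (add_le_add_left ?_ _)
  rw [(L B).iteratedFDeriv_comp_right (hgA.of_le le_rfl) x le_rfl]
  refine (ContinuousMultilinearMap.norm_compContinuousLinearMap_le _ _).trans ?_
  rw [mul_comm]
  refine mul_le_mul_of_nonneg_right ?_ (norm_nonneg _)
  calc ∏ _i : Fin n, ‖L B‖ ≤ ∏ _i : Fin n, (d : ℝ) :=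
        Finset.prod_le_prod (fun _ _ => norm_nonneg _) (fun _ _ => norm_L_le hB)
    _ = (d : ℝ) ^ n := by simp

lemma continuous_norm_iteratedFDeriv_diff {u : (Fin d → ℝ) → ℂ} (hu : ContDiff ℝ (⊤ : ℕ∞) u)
    (n : ℕ) (x : Fin d → ℝ) :
    Continuous fun A : Matrix (Fin d) (Fin d) ℝ =>
      ‖iteratedFDeriv ℝ n (fun y => u (A.mulVec y) - u y) x‖ := by
  have key : (fun A : Matrix (Fin d) (Fin d) ℝ =>
        ‖iteratedFDeriv ℝ n (fun y => u (A.mulVec y) - u y) x‖)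
      = fun A => ‖(ContinuousMultilinearMap.compContinuousLinearMapContinuousMultilinear
            ℝ (fun _ : Fin n => (Fin d → ℝ)) (fun _ : Fin n => (Fin d → ℝ)) ℂ
            (fun _ : Fin n => L A)) (iteratedFDeriv ℝ n u (A.mulVec x))
          - iteratedFDeriv ℝ n u x‖ := by
    funext A
    rw [iteratedFDeriv_diff hu A n x]
    rfl
  rw [key]
  have h1 : Continuous fun A : Matrix (Fin d) (Fin d) ℝ =>
      (ContinuousMultilinearMap.compContinuousLinearMapContinuousMultilinear
        ℝ (fun _ : Fin n => (Fin d → ℝ)) (fun _ : Fin n => (Fin d → ℝ)) ℂ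
        (fun _ : Fin n => L A)) :=
    (ContinuousMultilinearMap.compContinuousLinearMapContinuousMultilinear
      ℝ _ _ ℂ).coe_continuous.comp (continuous_pi fun _ => continuous_L)
  have h2 : Continuous fun A : Matrix (Fin d) (Fin d) ℝ =>
      iteratedFDeriv ℝ n u (A.mulVec x) :=
    (hu.continuous_iteratedFDeriv (by exact_mod_cast le_top)).comp
      (continuous_id.matrix_mulVec continuous_const)
  exact ((isBoundedBilinearMap_apply.continuous.comp (h1.prodMk h2)).sub
    continuous_const).norm

end OrthInvAux

open OrthInvAux


/-- A Colombeau generalized function invariant under all classical orthogonal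
transformations of `ℝ^d` is invariant under all generalized orthogonal transformations. -/
theorem invariance_generalized_orthogonal {d : ℕ}
    (f : ℝ → (Fin d → ℝ) → ℂ)
    (hf_smooth : ∀ ε ∈ Set.Ioo (0 : ℝ) 1, ContDiff ℝ (⊤ : ℕ∞) (f ε))
    (hf_mod : Moderate f)
    (hf_inv : ∀ A : Matrix (Fin d) (Fin d) ℝ, A.transpose * A = 1 →
      Negligible (fun ε x => f ε (A.mulVec x) - f ε x)) :
    ∀ A : ℝ → Matrix (Fin d) (Fin d) ℝ,
      (∀ ε ∈ Set.Ioo (0 : ℝ) 1, (A ε).transpose * A ε = 1) →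
      Negligible (fun ε x => f ε ((A ε).mulVec x) - f ε x) := by
  classical
  intro A hA K hK n b
  obtain ⟨R, hKR⟩ := exists_ball2 hK
  haveI hne : Nonempty ↥(Orth d) := ⟨⟨1, one_mem_Orth⟩⟩
  haveI : CompactSpace ↥(Orth d) := isCompact_iff_compactSpace.mp isCompact_Orth
  -- the Baire pieces
  let F : ℕ → Set ↥(Orth d) := fun m =>
    {A' | ∀ ε ∈ Set.Ioo (0:ℝ) 1, ε < 1 / ((m:ℝ)+1) → ∀ x ∈ ball2 d R,
      ‖iteratedFDeriv ℝ n (fun y => f ε ((A'.1).mulVec y) - f ε y) x‖ ≤ ((m:ℝ)+1) * ε ^ b}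
  have hFclosed : ∀ m, IsClosed (F m) := by
    intro m
    have hFeq : F m = ⋂ (p : ℝ × (Fin d → ℝ)),
        {A' : ↥(Orth d) | p.1 ∈ Set.Ioo (0:ℝ) 1 → p.1 < 1/((m:ℝ)+1) → p.2 ∈ ball2 d R →
          ‖iteratedFDeriv ℝ n (fun y => f p.1 ((A'.1).mulVec y) - f p.1 y) p.2‖
            ≤ ((m:ℝ)+1) * p.1 ^ b} := by
      ext A'
      simp only [Set.mem_iInter, Set.mem_setOf_eq, F]
      constructor
      · intro h p hp1 hp2 hp3; exact h p.1 hp1 hp2 p.2 hp3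
      · intro h ε hε hε' x hx; exact h (ε, x) hε hε' hx
    rw [hFeq]
    refine isClosed_iInter fun p => ?_
    by_cases hp1 : p.1 ∈ Set.Ioo (0:ℝ) 1
    · by_cases hp2 : p.1 < 1/((m:ℝ)+1)
      · by_cases hp3 : p.2 ∈ ball2 d R
        · have : {A' : ↥(Orth d) | p.1 ∈ Set.Ioo (0:ℝ) 1 → p.1 < 1/((m:ℝ)+1) →
              p.2 ∈ ball2 d R →
              ‖iteratedFDeriv ℝ n (fun y => f p.1 ((A'.1).mulVec y) - f p.1 y) p.2‖
                ≤ ((m:ℝ)+1) * p.1 ^ b}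
              = {A' : ↥(Orth d) |
                  ‖iteratedFDeriv ℝ n (fun y => f p.1 ((A'.1).mulVec y) - f p.1 y) p.2‖
                    ≤ ((m:ℝ)+1) * p.1 ^ b} := by
            ext A'
            exact ⟨fun h => h hp1 hp2 hp3, fun h _ _ _ => h⟩
          rw [this]
          exact isClosed_le
            ((continuous_norm_iteratedFDeriv_diff (hf_smooth p.1 hp1) n p.2).comp
              continuous_subtype_val) continuous_const
        · convert isClosed_univ
          ext A'
          simp only [Set.mem_setOf_eq, Set.mem_univ, iff_true]
          exact fun _ _ h3 => absurd h3 hp3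
      · convert isClosed_univ
        ext A'
        simp only [Set.mem_setOf_eq, Set.mem_univ, iff_true]
        exact fun _ h2 _ => absurd h2 hp2
    · convert isClosed_univ
      ext A'
      simp only [Set.mem_setOf_eq, Set.mem_univ, iff_true]
      exact fun h1 _ _ => absurd h1 hp1
  have hFcover : ⋃ m, F m = Set.univ := by
    ext A'
    simp only [Set.mem_iUnion, Set.mem_univ, iff_true]
    obtain ⟨C, hC, ε₀, hε₀, h⟩ := hf_inv A'.1 A'.2 (ball2 d R) (isCompact_ball2 R) n b
    obtain ⟨m, hm⟩ := exists_nat_ge (max C (1/ε₀))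
    refine ⟨m, fun ε hε hεm x hx => ?_⟩
    have hmC : C ≤ (m:ℝ)+1 := le_trans (le_max_left _ _) (hm.trans (by linarith))
    have h1 : 1/ε₀ ≤ (m:ℝ)+1 := le_trans (le_max_right _ _) (hm.trans (by linarith))
    have h2 : (1:ℝ) ≤ ((m:ℝ)+1) * ε₀ := (div_le_iff₀ hε₀).mp h1
    have hεε₀ : ε < ε₀ := by
      refine lt_of_lt_of_le hεm ?_
      rw [div_le_iff₀ (by positivity)]
      linarith
    exact le_trans (h ε hε hεε₀ x hx)
      (mul_le_mul_of_nonneg_right hmC (Real.rpow_pos_of_pos hε.1 b).le)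
  obtain ⟨m, hm⟩ := nonempty_interior_of_iUnion_of_closed hFclosed hFcover
  obtain ⟨A₀, hA₀⟩ := hm
  -- right translations and the finite subcover
  have hρmem : ∀ B A' : ↥(Orth d), A'.1 * (B.1ᵀ * A₀.1) ∈ Orth d :=
    fun B A' => Orth.mul A'.2 (Orth.mul (Orth.transpose B.2) A₀.2)
  let ρ : ↥(Orth d) → ↥(Orth d) → ↥(Orth d) := fun B A' => ⟨A'.1 * (B.1ᵀ * A₀.1), hρmem B A'⟩
  let W : ↥(Orth d) → Set ↥(Orth d) := fun B => (ρ B) ⁻¹' interior (F m)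
  have hWopen : ∀ B, IsOpen (W B) := fun B =>
    isOpen_interior.preimage
      (Continuous.subtype_mk (continuous_subtype_val.matrix_mul continuous_const) _)
  have hWself : ∀ B, B ∈ W B := by
    intro B
    have : ρ B B = A₀ := by
      apply Subtype.ext
      show B.1 * (B.1ᵀ * A₀.1) = A₀.1
      rw [← mul_assoc, mul_eq_one_comm.mp B.2, one_mul]
    simpa [W, this] using hA₀
  obtain ⟨t, ht⟩ := isCompact_univ.elim_finite_subcover W hWopen
    (fun A' _ => Set.mem_iUnion.2 ⟨A', hWself A'⟩)
  have htne : t.Nonempty := by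
    obtain ⟨A₁⟩ := hne
    have := ht (Set.mem_univ A₁)
    simp only [Set.mem_iUnion] at this
    obtain ⟨B, hBt, -⟩ := this
    exact ⟨B, hBt⟩
  -- constants for the finitely many classical transformations
  have hinv : ∀ B : ↥(Orth d), ∃ C, 0 < C ∧ ∃ ε₁, 0 < ε₁ ∧
      ∀ ε ∈ Set.Ioo (0:ℝ) 1, ε < ε₁ → ∀ x ∈ ball2 d R,
      ‖iteratedFDeriv ℝ n (fun y => f ε ((A₀.1ᵀ * B.1).mulVec y) - f ε y) x‖ ≤ C * ε ^ b := by
    intro B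
    obtain ⟨C, hC, ε₁, hε₁, h⟩ := hf_inv (A₀.1ᵀ * B.1)
      (Orth.mul (Orth.transpose A₀.2) B.2) (ball2 d R) (isCompact_ball2 R) n b
    exact ⟨C, hC, ε₁, hε₁, h⟩
  choose CB hCBpos εB hεBpos hCB using hinv
  have hsumnn : (0:ℝ) ≤ ∑ B' ∈ t, CB B' := Finset.sum_nonneg fun B' _ => (hCBpos B').le
  refine ⟨(d:ℝ)^n * ((m:ℝ)+1) + (∑ B' ∈ t, CB B') + 1, by positivity,
    min (1/((m:ℝ)+1)) (t.inf' htne εB), lt_min (by positivity)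
      ((Finset.lt_inf'_iff htne).2 fun B hBt => hεBpos B), ?_⟩
  intro ε hε hεlt x hx
  have hAε : (A ε)ᵀ * A ε = 1 := hA ε hε
  set Aε' : ↥(Orth d) := ⟨A ε, hAε⟩ with hAε'
  have hmem := ht (Set.mem_univ Aε')
  simp only [Set.mem_iUnion] at hmem
  obtain ⟨B, hBt, hmemW⟩ := hmem
  have hA'F : ρ B Aε' ∈ F m := interior_subset hmemW
  simp only [F, Set.mem_setOf_eq] at hA'F
  have hY : A₀.1ᵀ * B.1 ∈ Orth d := Orth.mul (Orth.transpose A₀.2) B.2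
  have hkey : A ε = (A ε * (B.1ᵀ * A₀.1)) * (A₀.1ᵀ * B.1) := by
    have h1 : A₀.1 * A₀.1ᵀ = 1 := mul_eq_one_comm.mp A₀.2
    have h3 : (B.1ᵀ * A₀.1) * (A₀.1ᵀ * B.1) = 1 := by
      rw [mul_assoc, ← mul_assoc A₀.1, h1, one_mul, B.2]
    rw [mul_assoc, h3, mul_one]
  have hx' : x ∈ ball2 d R := hKR hx
  have hε1m : ε < 1/((m:ℝ)+1) := lt_of_lt_of_le hεlt (min_le_left _ _)
  have hεB' : ε < εB B :=
    lt_of_lt_of_le hεlt ((min_le_right _ _).trans (Finset.inf'_le εB hBt))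
  have hrpow : (0:ℝ) ≤ ε ^ b := (Real.rpow_pos_of_pos hε.1 b).le
  calc ‖iteratedFDeriv ℝ n (fun y => f ε ((A ε).mulVec y) - f ε y) x‖
      = ‖iteratedFDeriv ℝ n
          (fun y => f ε (((A ε * (B.1ᵀ * A₀.1)) * (A₀.1ᵀ * B.1)).mulVec y) - f ε y) x‖ := by
        rw [← hkey]
    _ ≤ (d:ℝ)^n * ‖iteratedFDeriv ℝ n
          (fun y => f ε ((A ε * (B.1ᵀ * A₀.1)).mulVec y) - f ε y) ((A₀.1ᵀ * B.1).mulVec x)‖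
        + ‖iteratedFDeriv ℝ n (fun y => f ε ((A₀.1ᵀ * B.1).mulVec y) - f ε y) x‖ :=
        norm_bound (hf_smooth ε hε) _ _ hY n x
    _ ≤ (d:ℝ)^n * (((m:ℝ)+1) * ε^b) + CB B * ε^b := by
        refine add_le_add ?_ (hCB B ε hε hεB' x hx')
        refine mul_le_mul_of_nonneg_left ?_ (by positivity)
        exact hA'F ε hε hε1m _ (mulVec_mem_ball2 hY hx')
    _ ≤ ((d:ℝ)^n * ((m:ℝ)+1) + (∑ B' ∈ t, CB B') + 1) * ε ^ b := by
        have h1 : CB B ≤ ∑ B' ∈ t, CB B' :=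
          Finset.single_le_sum (fun B' _ => (hCBpos B').le) hBt
        have h3 : (d:ℝ)^n * (((m:ℝ)+1) * ε^b) + CB B * ε^b
            = ((d:ℝ)^n * ((m:ℝ)+1) + CB B) * ε^b := by ring
        rw [h3]
        exact mul_le_mul_of_nonneg_right (by linarith) hrpow
end

section
/- Let (f_ε)_{ε∈(0,1)} be a moderate net of smooth functions ℝ^{d+1} → ℂ. Suppose that for every fixed g ∈ Lor(d,ℝ) the net (x ↦ f_ε(g x) − f_ε(x))_ε is negligible. Then for every family (g_ε)_{ε∈(0,1)} with g_ε ∈ Lor(d,ℝ) for each ε and with all entries of g_ε bounded uniformly in ε, the net (x ↦ f_ε(g_ε x) − f_ε(x))_ε is negligible. -/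
set_option maxHeartbeats 1000000

attribute [local instance] Matrix.normedAddCommGroup Matrix.normedSpace

/-- The Minkowski form matrix `η = diag(1, −1, …, −1)` on `ℝ^{d+1}` (index `0` = time). -/
def minkowskiEta (d : ℕ) : Matrix (Fin (d + 1)) (Fin (d + 1)) ℝ :=
  Matrix.diagonal fun i => if i = 0 then 1 else -1

/-- Proper orthochronous Lorentz transformations of `ℝ^{d+1}`. -/
def IsLorentz {d : ℕ} (A : Matrix (Fin (d + 1)) (Fin (d + 1)) ℝ) : Prop :=
  A.transpose * minkowskiEta d * A = minkowskiEta d ∧ A.det = 1 ∧ 0 < A 0 0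

namespace LorentzInvAux

open Matrix Set Metric

variable {d : ℕ}

lemma eta_transpose (d : ℕ) : (minkowskiEta d)ᵀ = minkowskiEta d :=
  Matrix.diagonal_transpose _

lemma eta_sq (d : ℕ) : minkowskiEta d * minkowskiEta d = 1 := by
  rw [minkowskiEta, Matrix.diagonal_mul_diagonal]
  have h : (fun i : Fin (d+1) => (if i = 0 then (1:ℝ) else -1) * if i = 0 then (1:ℝ) else -1)
      = fun _ => (1:ℝ) := by
    funext i; by_cases h : i = 0 <;> simp [h]
  rw [h, Matrix.diagonal_one]

/-- explicit inverse of a Lorentz matrix -/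
def lorInv (A : Matrix (Fin (d + 1)) (Fin (d + 1)) ℝ) : Matrix (Fin (d + 1)) (Fin (d + 1)) ℝ :=
  minkowskiEta d * Aᵀ * minkowskiEta d

lemma eta_cancel (X : Matrix (Fin (d + 1)) (Fin (d + 1)) ℝ) :
    minkowskiEta d * (minkowskiEta d * X) = X := by
  rw [← Matrix.mul_assoc, eta_sq, Matrix.one_mul]

lemma lorInv_mul_self {A : Matrix (Fin (d + 1)) (Fin (d + 1)) ℝ}
    (h : Aᵀ * minkowskiEta d * A = minkowskiEta d) : lorInv A * A = 1 := by
  have e : lorInv A * A = minkowskiEta d * (Aᵀ * minkowskiEta d * A) := by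
    simp only [lorInv, Matrix.mul_assoc]
  rw [e, h, eta_sq]

lemma self_mul_lorInv {A : Matrix (Fin (d + 1)) (Fin (d + 1)) ℝ}
    (h : Aᵀ * minkowskiEta d * A = minkowskiEta d) : A * lorInv A = 1 :=
  mul_eq_one_comm.mpr (lorInv_mul_self h)

lemma rel_iff {A : Matrix (Fin (d + 1)) (Fin (d + 1)) ℝ} :
    Aᵀ * minkowskiEta d * A = minkowskiEta d ↔ lorInv A * A = 1 := by
  constructor
  · exact lorInv_mul_self
  · intro h
    have h2 := congrArg (fun X => minkowskiEta d * X) h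
    simp only [lorInv, Matrix.mul_assoc, eta_cancel, Matrix.mul_one] at h2
    simpa only [Matrix.mul_assoc] using h2

lemma lorInv_lorInv (A : Matrix (Fin (d + 1)) (Fin (d + 1)) ℝ) : lorInv (lorInv A) = A := by
  simp only [lorInv, Matrix.transpose_mul, eta_transpose, Matrix.transpose_transpose,
    Matrix.mul_assoc, eta_cancel, eta_sq, Matrix.mul_one]

lemma lorInv_mul (A B : Matrix (Fin (d + 1)) (Fin (d + 1)) ℝ) :
    lorInv (A * B) = lorInv B * lorInv A := by
  simp only [lorInv, Matrix.transpose_mul, Matrix.mul_assoc, eta_cancel]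

lemma sum_sq {A : Matrix (Fin (d + 1)) (Fin (d + 1)) ℝ}
    (h : Aᵀ * minkowskiEta d * A = minkowskiEta d) :
    A 0 0 ^ 2 = 1 + ∑ k ∈ Finset.univ.erase (0 : Fin (d+1)), A k 0 ^ 2 := by
  have hD : ∀ k j : Fin (d+1), (minkowskiEta d * A) k j
      = (if k = 0 then (1:ℝ) else -1) * A k j := fun k j => by
    rw [minkowskiEta, Matrix.diagonal_mul]
  have h00 : (Aᵀ * (minkowskiEta d * A)) 0 0 = minkowskiEta d 0 0 := by
    rw [← Matrix.mul_assoc, h]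
  rw [Matrix.mul_apply] at h00
  simp only [Matrix.transpose_apply, hD] at h00
  have hrhs : minkowskiEta d 0 0 = 1 := by
    rw [minkowskiEta, Matrix.diagonal_apply_eq]; norm_num
  rw [hrhs, ← Finset.add_sum_erase _ _ (Finset.mem_univ (0 : Fin (d+1)))] at h00
  simp only [if_pos rfl, if_true, one_mul] at h00
  have e : ∑ k ∈ Finset.univ.erase (0 : Fin (d+1)), A k 0 * ((if k = 0 then (1:ℝ) else -1) * A k 0)
      = - ∑ k ∈ Finset.univ.erase (0 : Fin (d+1)), A k 0 ^ 2 := by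
    rw [← Finset.sum_neg_distrib]
    refine Finset.sum_congr rfl fun k hk => ?_
    have hk0 : k ≠ 0 := Finset.ne_of_mem_erase hk
    simp only [if_neg hk0]; ring
  rw [e] at h00
  linear_combination h00

lemma one_le_time {A : Matrix (Fin (d + 1)) (Fin (d + 1)) ℝ} (hA : IsLorentz A) :
    1 ≤ A 0 0 := by
  have h := sum_sq hA.1
  have hs : 0 ≤ ∑ k ∈ Finset.univ.erase (0 : Fin (d+1)), A k 0 ^ 2 :=
    Finset.sum_nonneg fun k _ => sq_nonneg _
  nlinarith [hA.2.2]

lemma row_rel {A : Matrix (Fin (d + 1)) (Fin (d + 1)) ℝ}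
    (h : Aᵀ * minkowskiEta d * A = minkowskiEta d) :
    A * minkowskiEta d * Aᵀ = minkowskiEta d := by
  have h1 : A * lorInv A = 1 := self_mul_lorInv h
  have h2 : A * minkowskiEta d * Aᵀ * minkowskiEta d = 1 := by
    calc A * minkowskiEta d * Aᵀ * minkowskiEta d = A * lorInv A := by
          simp only [lorInv, Matrix.mul_assoc]
      _ = 1 := h1
  calc A * minkowskiEta d * Aᵀ
      = A * minkowskiEta d * Aᵀ * (minkowskiEta d * minkowskiEta d) := by
        rw [eta_sq, Matrix.mul_one]
    _ = (A * minkowskiEta d * Aᵀ * minkowskiEta d) * minkowskiEta d := by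
        simp only [Matrix.mul_assoc]
    _ = minkowskiEta d := by rw [h2, Matrix.one_mul]

lemma time_pos_mul {A B : Matrix (Fin (d + 1)) (Fin (d + 1)) ℝ}
    (hA : IsLorentz A) (hB : IsLorentz B) : 0 < (A * B) 0 0 := by
  have ha : 1 ≤ A 0 0 := one_le_time hA
  have hb : 1 ≤ B 0 0 := one_le_time hB
  have hrowA : A 0 0 ^ 2 = 1 + ∑ k ∈ Finset.univ.erase (0 : Fin (d+1)), A 0 k ^ 2 := by
    have h := sum_sq (A := Aᵀ) (by rw [Matrix.transpose_transpose]; exact row_rel hA.1)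
    simpa [Matrix.transpose_apply] using h
  have hcolB : B 0 0 ^ 2 = 1 + ∑ k ∈ Finset.univ.erase (0 : Fin (d+1)), B k 0 ^ 2 :=
    sum_sq hB.1
  have hmul : (A * B) 0 0
      = A 0 0 * B 0 0 + ∑ k ∈ Finset.univ.erase (0 : Fin (d+1)), A 0 k * B k 0 := by
    rw [Matrix.mul_apply, ← Finset.add_sum_erase _ _ (Finset.mem_univ (0 : Fin (d+1)))]
  have hcs := Finset.sum_mul_sq_le_sq_mul_sq (Finset.univ.erase (0 : Fin (d+1)))
    (fun k => A 0 k) (fun k => B k 0)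
  rw [hmul]
  by_contra hcon
  push_neg at hcon
  have h1 : 0 < A 0 0 * B 0 0 := by nlinarith
  have h2 : A 0 0 * B 0 0 ≤ -(∑ k ∈ Finset.univ.erase (0 : Fin (d+1)), A 0 k * B k 0) := by
    linarith
  have h3 : (A 0 0 * B 0 0)^2 ≤ (∑ k ∈ Finset.univ.erase (0 : Fin (d+1)), A 0 k * B k 0)^2 := by
    nlinarith
  nlinarith

lemma isLorentz_mul {A B : Matrix (Fin (d + 1)) (Fin (d + 1)) ℝ}
    (hA : IsLorentz A) (hB : IsLorentz B) : IsLorentz (A * B) := by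
  refine ⟨?_, ?_, time_pos_mul hA hB⟩
  · rw [rel_iff, lorInv_mul]
    calc lorInv B * lorInv A * (A * B) = lorInv B * ((lorInv A * A) * B) := by
          simp only [Matrix.mul_assoc]
      _ = lorInv B * B := by rw [rel_iff.mp hA.1, Matrix.one_mul]
      _ = 1 := rel_iff.mp hB.1
  · rw [Matrix.det_mul, hA.2.1, hB.2.1, mul_one]

lemma lorInv_00 (A : Matrix (Fin (d + 1)) (Fin (d + 1)) ℝ) : lorInv A 0 0 = A 0 0 := by
  simp [lorInv, minkowskiEta, Matrix.mul_diagonal, Matrix.diagonal_mul, Matrix.transpose_apply]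

lemma isLorentz_lorInv {A : Matrix (Fin (d + 1)) (Fin (d + 1)) ℝ}
    (hA : IsLorentz A) : IsLorentz (lorInv A) := by
  refine ⟨?_, ?_, ?_⟩
  · rw [rel_iff, lorInv_lorInv]
    exact self_mul_lorInv hA.1
  · have hdet : (minkowskiEta d).det * (minkowskiEta d).det = 1 := by
      rw [← Matrix.det_mul, eta_sq, Matrix.det_one]
    rw [lorInv, Matrix.det_mul, Matrix.det_mul, Matrix.det_transpose, hA.2.1, mul_one]
    exact hdet
  · rw [lorInv_00]; exact hA.2.2

/-! ### Analysis lemmas -/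

noncomputable def mvCLM (A : Matrix (Fin (d + 1)) (Fin (d + 1)) ℝ) :
    (Fin (d + 1) → ℝ) →L[ℝ] (Fin (d + 1) → ℝ) :=
  LinearMap.toContinuousLinearMap (Matrix.mulVecLin A)

lemma mvCLM_apply (A : Matrix (Fin (d + 1)) (Fin (d + 1)) ℝ) (x : Fin (d + 1) → ℝ) :
    mvCLM A x = A.mulVec x := rfl

lemma mulVec_norm_le (A : Matrix (Fin (d + 1)) (Fin (d + 1)) ℝ) (z : Fin (d + 1) → ℝ) :
    ‖A.mulVec z‖ ≤ ((d : ℝ) + 1) * ‖A‖ * ‖z‖ := by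
  rw [pi_norm_le_iff_of_nonneg (by positivity)]
  intro i
  have he : A.mulVec z i = ∑ j, A i j * z j := by
    simp [Matrix.mulVec, dotProduct]
  rw [he]
  calc ‖∑ j, A i j * z j‖ ≤ ∑ j, ‖A i j * z j‖ := norm_sum_le _ _
    _ ≤ ∑ _j : Fin (d + 1), ‖A‖ * ‖z‖ := by
        refine Finset.sum_le_sum fun j _ => ?_
        rw [norm_mul]
        exact mul_le_mul (Matrix.norm_entry_le_entrywise_sup_norm A)
          (norm_le_pi_norm z j) (norm_nonneg _) (norm_nonneg _)
    _ = ((d : ℝ) + 1) * ‖A‖ * ‖z‖ := by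
        rw [Finset.sum_const, Finset.card_univ, Fintype.card_fin, nsmul_eq_mul]
        push_cast; ring

lemma mvCLM_norm_le (A : Matrix (Fin (d + 1)) (Fin (d + 1)) ℝ) :
    ‖mvCLM A‖ ≤ ((d : ℝ) + 1) * ‖A‖ :=
  ContinuousLinearMap.opNorm_le_bound _ (by positivity) fun z => by
    rw [mvCLM_apply]; exact mulVec_norm_le A z

lemma iter_eval {F : (Fin (d + 1) → ℝ) → ℂ} (hF : ContDiff ℝ (⊤ : ℕ∞) F)
    (A : Matrix (Fin (d + 1)) (Fin (d + 1)) ℝ) (n : ℕ) (x : Fin (d + 1) → ℝ)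
    (y : Fin n → (Fin (d + 1) → ℝ)) :
    iteratedFDeriv ℝ n (fun z => F (A.mulVec z)) x y
      = iteratedFDeriv ℝ n F (A.mulVec x) (fun i => A.mulVec (y i)) := by
  have h1 : (fun z => F (A.mulVec z)) = F ∘ (mvCLM A) := rfl
  rw [h1, ContinuousLinearMap.iteratedFDeriv_comp_right (mvCLM A) hF x (by exact_mod_cast le_top)]
  simp [ContinuousMultilinearMap.compContinuousLinearMap_apply]
  rfl

lemma iter_sub {p q : (Fin (d + 1) → ℝ) → ℂ} (n : ℕ)
    (hp : ContDiff ℝ (⊤ : ℕ∞) p) (hq : ContDiff ℝ (⊤ : ℕ∞) q) (x : Fin (d + 1) → ℝ) :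
    iteratedFDeriv ℝ n (fun z => p z - q z) x
      = iteratedFDeriv ℝ n p x - iteratedFDeriv ℝ n q x := by
  have e : (fun z => p z - q z) = p + (-q) := by
    funext z; simp [sub_eq_add_neg]
  have hq' : ContDiff ℝ (n : ℕ∞) (-q) :=
    ((hq.of_le (by exact_mod_cast le_top)).neg : ContDiff ℝ (n : ℕ∞) fun z => -q z)
  rw [e, iteratedFDeriv_add_apply (hp.of_le (by exact_mod_cast le_top)).contDiffAt hq'.contDiffAt,
    iteratedFDeriv_neg_apply, ← sub_eq_add_neg]

variable (f : ℝ → (Fin (d + 1) → ℝ) → ℂ)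

def GoodSet (K : Set (Fin (d + 1) → ℝ)) (n : ℕ) (b : ℝ) (m : ℕ) :
    Set (Matrix (Fin (d + 1)) (Fin (d + 1)) ℝ) :=
  {A | ∀ ε ∈ Set.Ioo (0:ℝ) 1, ε < 1/((m:ℝ)+1) → ∀ x ∈ K, ∀ y : Fin n → (Fin (d + 1) → ℝ),
    ‖iteratedFDeriv ℝ n (f ε) (A.mulVec x) (fun i => A.mulVec (y i))
      - iteratedFDeriv ℝ n (f ε) x y‖ ≤ ((m:ℝ)+1) * ε ^ b * ∏ i, ‖y i‖}

lemma key_eval (hf_smooth : ∀ ε ∈ Set.Ioo (0:ℝ) 1, ContDiff ℝ (⊤ : ℕ∞) (f ε))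
    (A : Matrix (Fin (d + 1)) (Fin (d + 1)) ℝ) {ε : ℝ} (hε : ε ∈ Set.Ioo (0:ℝ) 1)
    (n : ℕ) (x : Fin (d + 1) → ℝ) (y : Fin n → (Fin (d + 1) → ℝ)) :
    iteratedFDeriv ℝ n (fun z => f ε (A.mulVec z) - f ε z) x y
      = iteratedFDeriv ℝ n (f ε) (A.mulVec x) (fun i => A.mulVec (y i))
        - iteratedFDeriv ℝ n (f ε) x y := by
  have hsm := hf_smooth ε hε
  have h1 : ContDiff ℝ (⊤ : ℕ∞) (fun z => f ε (A.mulVec z)) := hsm.comp (mvCLM A).contDiff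
  rw [iter_sub (p := fun z => f ε (A.mulVec z)) (q := f ε) n h1 hsm x,
    ContinuousMultilinearMap.sub_apply, iter_eval hsm A n x y]

lemma goodSet_iff (hf_smooth : ∀ ε ∈ Set.Ioo (0:ℝ) 1, ContDiff ℝ (⊤ : ℕ∞) (f ε))
    (K : Set (Fin (d + 1) → ℝ)) (n : ℕ) (b : ℝ) (m : ℕ)
    (A : Matrix (Fin (d + 1)) (Fin (d + 1)) ℝ) :
    A ∈ GoodSet f K n b m ↔ ∀ ε ∈ Set.Ioo (0:ℝ) 1, ε < 1/((m:ℝ)+1) → ∀ x ∈ K,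
      ‖iteratedFDeriv ℝ n (fun z => f ε (A.mulVec z) - f ε z) x‖ ≤ ((m:ℝ)+1) * ε ^ b := by
  constructor
  · intro h ε hε hε' x hx
    have hεb : (0:ℝ) ≤ ε ^ b := Real.rpow_nonneg (le_of_lt hε.1) b
    have hnn : (0:ℝ) ≤ ((m:ℝ)+1) * ε ^ b := by positivity
    rw [ContinuousMultilinearMap.opNorm_le_iff hnn]
    intro y
    rw [key_eval f hf_smooth A hε n x y]
    exact h ε hε hε' x hx y
  · intro h ε hε hε' x hx y
    rw [← key_eval f hf_smooth A hε n x y]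
    calc ‖iteratedFDeriv ℝ n (fun z => f ε (A.mulVec z) - f ε z) x y‖
        ≤ ‖iteratedFDeriv ℝ n (fun z => f ε (A.mulVec z) - f ε z) x‖ * ∏ i, ‖y i‖ :=
          ContinuousMultilinearMap.le_opNorm _ y
      _ ≤ ((m:ℝ)+1) * ε ^ b * ∏ i, ‖y i‖ :=
          mul_le_mul_of_nonneg_right (h ε hε hε' x hx)
            (Finset.prod_nonneg fun i _ => norm_nonneg _)

lemma goodSet_closed (hf_smooth : ∀ ε ∈ Set.Ioo (0:ℝ) 1, ContDiff ℝ (⊤ : ℕ∞) (f ε))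
    (K : Set (Fin (d + 1) → ℝ)) (n : ℕ) (b : ℝ) (m : ℕ) :
    IsClosed (GoodSet f K n b m) := by
  have e : GoodSet f K n b m =
      ⋂ (ε : ℝ), ⋂ (_ : ε ∈ Set.Ioo (0:ℝ) 1 ∧ ε < 1/((m:ℝ)+1)),
      ⋂ (x : Fin (d+1) → ℝ), ⋂ (_ : x ∈ K), ⋂ (y : Fin n → (Fin (d+1) → ℝ)),
      {A : Matrix (Fin (d + 1)) (Fin (d + 1)) ℝ |
        ‖iteratedFDeriv ℝ n (f ε) (A.mulVec x) (fun i => A.mulVec (y i))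
          - iteratedFDeriv ℝ n (f ε) x y‖ ≤ ((m:ℝ)+1) * ε ^ b * ∏ i, ‖y i‖} := by
    ext A
    simp only [GoodSet, Set.mem_setOf_eq, Set.mem_iInter]
    exact ⟨fun h ε hε x hx y => h ε hε.1 hε.2 x hx y,
      fun h ε h1 h2 x hx y => h ε ⟨h1, h2⟩ x hx y⟩
  rw [e]
  refine isClosed_iInter fun ε => isClosed_iInter fun hε => isClosed_iInter fun x =>
    isClosed_iInter fun hx => isClosed_iInter fun y => ?_
  refine isClosed_le (Continuous.norm (Continuous.sub ?_ continuous_const)) continuous_const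
  have hc1 : Continuous fun A : Matrix (Fin (d+1)) (Fin (d+1)) ℝ =>
      iteratedFDeriv ℝ n (f ε) (A.mulVec x) :=
    (ContDiff.continuous_iteratedFDeriv (by exact_mod_cast le_top) (hf_smooth ε hε.1)).comp
      (continuous_id.matrix_mulVec continuous_const)
  have hc2 : Continuous fun A : Matrix (Fin (d+1)) (Fin (d+1)) ℝ =>
      (fun i => A.mulVec (y i) : Fin n → Fin (d+1) → ℝ) :=
    continuous_pi fun i => continuous_id.matrix_mulVec continuous_const
  exact ContinuousEval.continuous_eval.comp (hc1.prodMk hc2)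

end LorentzInvAux

open LorentzInvAux Matrix Set Metric in
/-- A Colombeau generalized function on `ℝ^{d+1}` invariant under all classical proper
orthochronous Lorentz transformations is invariant under all generalized (uniformly
bounded) Lorentz transformations. -/
theorem invariance_generalized_lorentz {d : ℕ}
    (f : ℝ → (Fin (d + 1) → ℝ) → ℂ)
    (hf_smooth : ∀ ε ∈ Set.Ioo (0 : ℝ) 1, ContDiff ℝ (⊤ : ℕ∞) (f ε))
    (hf_mod : Moderate f)
    (hf_inv : ∀ g : Matrix (Fin (d + 1)) (Fin (d + 1)) ℝ, IsLorentz g →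
      Negligible (fun ε x => f ε (g.mulVec x) - f ε x)) :
    ∀ g : ℝ → Matrix (Fin (d + 1)) (Fin (d + 1)) ℝ,
      (∀ ε ∈ Set.Ioo (0 : ℝ) 1, IsLorentz (g ε)) →
      (∃ C > (0 : ℝ), ∀ ε ∈ Set.Ioo (0 : ℝ) 1, ∀ i j, |g ε i j| ≤ C) →
      Negligible (fun ε x => f ε ((g ε).mulVec x) - f ε x) := by
  classical
  intro g hgLor hgB
  obtain ⟨Cg, hCg0, hCgB⟩ := hgB
  intro K hK n b
  haveI hcompl : CompleteSpace (Matrix (Fin (d+1)) (Fin (d+1)) ℝ) :=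
    FiniteDimensional.complete ℝ _
  -- the set of Lorentz matrices is closed
  have hLorClosed : IsClosed {A : Matrix (Fin (d+1)) (Fin (d+1)) ℝ | IsLorentz A} := by
    have e : {A : Matrix (Fin (d+1)) (Fin (d+1)) ℝ | IsLorentz A}
        = {A : Matrix (Fin (d+1)) (Fin (d+1)) ℝ | Aᵀ * minkowskiEta d * A = minkowskiEta d}
          ∩ ({A : Matrix (Fin (d+1)) (Fin (d+1)) ℝ | A.det = 1}
            ∩ {A : Matrix (Fin (d+1)) (Fin (d+1)) ℝ | 1 ≤ A 0 0}) := by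
      ext A
      constructor
      · intro h; exact ⟨h.1, h.2.1, one_le_time h⟩
      · rintro ⟨h1, h2, h3⟩; exact ⟨h1, h2, lt_of_lt_of_le one_pos h3⟩
    rw [e]
    refine (isClosed_eq
        ((continuous_id.matrix_transpose.matrix_mul continuous_const).matrix_mul continuous_id)
        continuous_const).inter
      ((isClosed_eq continuous_id.matrix_det continuous_const).inter
        (isClosed_le continuous_const (continuous_id.matrix_elem 0 0)))
  haveI : CompleteSpace {A : Matrix (Fin (d+1)) (Fin (d+1)) ℝ // IsLorentz A} :=
    hLorClosed.completeSpace_coe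
  haveI : Nonempty {A : Matrix (Fin (d+1)) (Fin (d+1)) ℝ // IsLorentz A} :=
    ⟨⟨g (1/2), hgLor (1/2) (by norm_num)⟩⟩
  haveI : (_root_.uniformity {A : Matrix (Fin (d+1)) (Fin (d+1)) ℝ // IsLorentz A}).IsCountablyGenerated :=
    EMetric.instIsCountablyGeneratedUniformity
  haveI : TopologicalSpace.IsCompletelyPseudoMetrizableSpace
      {A : Matrix (Fin (d+1)) (Fin (d+1)) ℝ // IsLorentz A} :=
    TopologicalSpace.IsCompletelyPseudoMetrizableSpace.of_completeSpace_pseudometrizable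
  -- Baire category argument
  have hcover : (⋃ m : ℕ, (Subtype.val ⁻¹' (GoodSet f K n b m) :
      Set {A : Matrix (Fin (d+1)) (Fin (d+1)) ℝ // IsLorentz A})) = Set.univ := by
    rw [Set.eq_univ_iff_forall]
    intro A
    obtain ⟨C0, hC00, ε₀, hε₀0, hb0⟩ := hf_inv A.1 A.2 K hK n b
    obtain ⟨m, hm⟩ := exists_nat_gt (max C0 (1/ε₀))
    refine Set.mem_iUnion.mpr ⟨m, ?_⟩
    refine (goodSet_iff f hf_smooth K n b m A.1).mpr ?_
    intro ε hε hεlt x hx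
    have h1 : 1/ε₀ < (m:ℝ)+1 :=
      lt_trans (lt_of_le_of_lt (le_max_right _ _) hm) (lt_add_one _)
    have h2 : 1/((m:ℝ)+1) < ε₀ := by
      rw [div_lt_iff₀ (by positivity : (0:ℝ) < (m:ℝ)+1)]
      rw [div_lt_iff₀ hε₀0] at h1
      linarith [mul_comm ε₀ ((m:ℝ)+1)]
    have hC0m : C0 ≤ (m:ℝ)+1 :=
      le_of_lt (lt_trans (lt_of_le_of_lt (le_max_left _ _) hm) (lt_add_one _))
    exact (hb0 ε hε (hεlt.trans h2) x hx).trans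
      (mul_le_mul_of_nonneg_right hC0m (Real.rpow_nonneg hε.1.le b))
  obtain ⟨m₀, A₀, hA₀⟩ := nonempty_interior_of_iUnion_of_closed
    (fun m => (goodSet_closed f hf_smooth K n b m).preimage continuous_subtype_val) hcover
  obtain ⟨O, hOopen, hOeq⟩ := isOpen_induced_iff.mp
    (isOpen_interior (s := (Subtype.val ⁻¹' (GoodSet f K n b m₀) :
      Set {A : Matrix (Fin (d+1)) (Fin (d+1)) ℝ // IsLorentz A})))
  obtain ⟨h₀, hh₀⟩ := A₀
  have hA₀O : h₀ ∈ O := by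
    have h1 : (⟨h₀, hh₀⟩ : {A : Matrix (Fin (d+1)) (Fin (d+1)) ℝ // IsLorentz A})
        ∈ Subtype.val ⁻¹' O := by rw [hOeq]; exact hA₀
    exact h1
  obtain ⟨r, hr0, hball⟩ := Metric.isOpen_iff.mp hOopen h₀ hA₀O
  have hballP : ∀ u : Matrix (Fin (d+1)) (Fin (d+1)) ℝ, IsLorentz u → dist u h₀ < r →
      u ∈ GoodSet f K n b m₀ := by
    intro u hu hd
    have h2 : u ∈ O := hball (Metric.mem_ball.mpr hd)
    have h3 : (⟨u, hu⟩ : {A : Matrix (Fin (d+1)) (Fin (d+1)) ℝ // IsLorentz A})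
        ∈ Subtype.val ⁻¹' O := h2
    rw [hOeq] at h3
    have h4 : (⟨u, hu⟩ : {A : Matrix (Fin (d+1)) (Fin (d+1)) ℝ // IsLorentz A})
        ∈ Subtype.val ⁻¹' (GoodSet f K n b m₀) := interior_subset h3
    exact h4
  -- compact set of bounded Lorentz matrices and a finite cover by translates
  obtain ⟨RK, hRK0, hRKsub⟩ := hK.isBounded.subset_closedBall_lt 0 0
  have hnorm_h₀r : (0:ℝ) < ‖h₀‖ + r := add_pos_of_nonneg_of_pos (norm_nonneg _) hr0
  set κ : ℝ := ((d:ℝ)+1) * (‖h₀‖ + r) with hκdef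
  have hκ0 : 0 < κ := mul_pos (by positivity) hnorm_h₀r
  set ρ : ℝ := κ * RK with hρdef
  set S : Set (Matrix (Fin (d+1)) (Fin (d+1)) ℝ) :=
    {A | IsLorentz A ∧ ∀ i j, |A i j| ≤ Cg} with hSdef
  have hSmem : ∀ ε ∈ Set.Ioo (0:ℝ) 1, g ε ∈ S := fun ε hε => ⟨hgLor ε hε, hCgB ε hε⟩
  have hSclosed : IsClosed S := by
    have e : S = {A : Matrix (Fin (d+1)) (Fin (d+1)) ℝ | IsLorentz A}
        ∩ ⋂ (i : Fin (d+1)), ⋂ (j : Fin (d+1)),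
          {A : Matrix (Fin (d+1)) (Fin (d+1)) ℝ | |A i j| ≤ Cg} := by
      ext A
      simp only [hSdef, Set.mem_setOf_eq, Set.mem_inter_iff, Set.mem_iInter]
    rw [e]
    exact hLorClosed.inter (isClosed_iInter fun i => isClosed_iInter fun j =>
      isClosed_le (continuous_abs.comp (continuous_id.matrix_elem i j)) continuous_const)
  have hSbdd : Bornology.IsBounded S := by
    refine (Metric.isBounded_closedBall (x := (0 : Matrix (Fin (d+1)) (Fin (d+1)) ℝ))
      (r := Cg)).subset ?_
    intro A hA
    rw [Metric.mem_closedBall, dist_zero_right]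
    exact (Matrix.norm_le_iff hCg0.le).mpr fun i j => by
      rw [Real.norm_eq_abs]; exact hA.2 i j
  have hScompact : IsCompact S := Metric.isCompact_of_isClosed_isBounded hSclosed hSbdd
  set U : S → Set (Matrix (Fin (d+1)) (Fin (d+1)) ℝ) :=
    fun j => {A | dist ((h₀ * lorInv j.1) * A) h₀ < r} with hUdef
  have hUopen : ∀ j, IsOpen (U j) := fun j =>
    isOpen_lt ((continuous_const.matrix_mul continuous_id).dist continuous_const)
      continuous_const
  have hUcover : S ⊆ ⋃ j : S, U j := by
    intro A hA
    refine Set.mem_iUnion.mpr ⟨⟨A, hA⟩, ?_⟩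
    show dist ((h₀ * lorInv A) * A) h₀ < r
    rw [Matrix.mul_assoc, lorInv_mul_self hA.1.1, Matrix.mul_one, dist_self]
    exact hr0
  obtain ⟨t, ht⟩ := hScompact.elim_finite_subcover U hUopen hUcover
  have htne : t.Nonempty := by
    obtain ⟨j, hj, _⟩ := Set.mem_iUnion₂.mp (ht (hSmem (1/2) (by norm_num)))
    exact ⟨j, hj⟩
  -- constants for the finitely many fixed Lorentz matrices
  have hLj : ∀ j : S, IsLorentz (j.1 * lorInv h₀) := fun j =>
    isLorentz_mul j.2.1 (isLorentz_lorInv hh₀)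
  have hchoice : ∀ j : S, ∃ C1 : ℝ, 0 < C1 ∧ ∃ e1 : ℝ, 0 < e1 ∧
      ∀ ε ∈ Set.Ioo (0:ℝ) 1, ε < e1 → ∀ z ∈ Metric.closedBall (0 : Fin (d+1) → ℝ) ρ,
        ‖iteratedFDeriv ℝ n (fun w => f ε ((j.1 * lorInv h₀).mulVec w) - f ε w) z‖
          ≤ C1 * ε ^ b := by
    intro j
    obtain ⟨C1, hC1, e1, he1, hb1⟩ := hf_inv (j.1 * lorInv h₀) (hLj j)
      (Metric.closedBall 0 ρ) (isCompact_closedBall _ _) n b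
    exact ⟨C1, hC1, e1, he1, hb1⟩
  choose CC hCC EE hEE hJb using hchoice
  set Csup := t.sup' htne CC with hCsupdef
  set Einf := t.inf' htne EE with hEinfdef
  have hCsup0 : 0 < Csup := by
    obtain ⟨j₀, hj₀⟩ := htne
    exact lt_of_lt_of_le (hCC j₀) (Finset.le_sup' CC hj₀)
  refine ⟨((m₀:ℝ)+1) + Csup * κ^n, ?_, min (1/((m₀:ℝ)+1)) Einf, ?_, ?_⟩
  · have h1 : (0:ℝ) < (m₀:ℝ)+1 := by positivity
    have h2 : 0 ≤ Csup * κ^n := mul_nonneg hCsup0.le (pow_nonneg hκ0.le n)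
    linarith
  · exact lt_min (by positivity) (by rw [Finset.lt_inf'_iff]; exact fun j _ => hEE j)
  · intro ε hε hεlt x hx
    show ‖iteratedFDeriv ℝ n (fun z => f ε ((g ε).mulVec z) - f ε z) x‖
      ≤ (((m₀:ℝ)+1) + Csup * κ^n) * ε ^ b
    obtain ⟨j, hjt, hjU⟩ := Set.mem_iUnion₂.mp (ht (hSmem ε hε))
    set u : Matrix (Fin (d+1)) (Fin (d+1)) ℝ := (h₀ * lorInv j.1) * g ε with hudef
    have hu : IsLorentz u :=
      isLorentz_mul (isLorentz_mul hh₀ (isLorentz_lorInv j.2.1)) (hgLor ε hε)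
    have hdu : dist u h₀ < r := hjU
    have hPu : u ∈ GoodSet f K n b m₀ := hballP u hu hdu
    set L : Matrix (Fin (d+1)) (Fin (d+1)) ℝ := j.1 * lorInv h₀ with hLdef
    have hLu : L * u = g ε := by
      calc L * u = j.1 * ((lorInv h₀ * h₀) * (lorInv j.1 * g ε)) := by
            simp only [hLdef, hudef, Matrix.mul_assoc]
        _ = j.1 * (lorInv j.1 * g ε) := by rw [lorInv_mul_self hh₀.1, Matrix.one_mul]
        _ = (j.1 * lorInv j.1) * g ε := by rw [Matrix.mul_assoc]
        _ = g ε := by rw [self_mul_lorInv j.2.1.1, Matrix.one_mul]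
    have hsm := hf_smooth ε hε
    have hvL : ContDiff ℝ (⊤ : ℕ∞) (fun w => f ε (L.mulVec w) - f ε w) :=
      (hsm.comp (mvCLM L).contDiff).sub hsm
    have hwc : ContDiff ℝ (⊤ : ℕ∞) (fun z => f ε (u.mulVec z) - f ε z) :=
      (hsm.comp (mvCLM u).contDiff).sub hsm
    have huc : ContDiff ℝ (⊤ : ℕ∞) (fun z => (fun w => f ε (L.mulVec w) - f ε w) (u.mulVec z)) :=
      hvL.comp (mvCLM u).contDiff
    have hfun : (fun z => f ε ((g ε).mulVec z) - f ε z)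
        = (fun z => (fun w => f ε (L.mulVec w) - f ε w) (u.mulVec z))
          + (fun z => f ε (u.mulVec z) - f ε z) := by
      funext z
      simp only [Pi.add_apply]
      rw [Matrix.mulVec_mulVec, hLu]
      ring
    rw [hfun, iteratedFDeriv_add_apply (huc.of_le (by exact_mod_cast le_top)).contDiffAt (hwc.of_le (by exact_mod_cast le_top)).contDiffAt]
    have hεb : (0:ℝ) ≤ ε ^ b := Real.rpow_nonneg hε.1.le b
    have hterm2 : ‖iteratedFDeriv ℝ n (fun z => f ε (u.mulVec z) - f ε z) x‖
        ≤ ((m₀:ℝ)+1) * ε^b :=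
      (goodSet_iff f hf_smooth K n b m₀ u).mp hPu ε hε
        (hεlt.trans_le (min_le_left _ _)) x hx
    have hcomp : iteratedFDeriv ℝ n (fun z => (fun w => f ε (L.mulVec w) - f ε w) (u.mulVec z)) x
        = (iteratedFDeriv ℝ n (fun w => f ε (L.mulVec w) - f ε w)
            (u.mulVec x)).compContinuousLinearMap (fun _ => mvCLM u) := by
      have h1 : (fun z => (fun w => f ε (L.mulVec w) - f ε w) (u.mulVec z))
          = (fun w => f ε (L.mulVec w) - f ε w) ∘ (mvCLM u) := rfl
      rw [h1, ContinuousLinearMap.iteratedFDeriv_comp_right (mvCLM u) hvL x (by exact_mod_cast le_top)]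
      rfl
    have hunorm : ‖u‖ ≤ ‖h₀‖ + r := by
      have h1 : ‖u‖ ≤ ‖h₀‖ + ‖u - h₀‖ := by
        calc ‖u‖ = ‖h₀ + (u - h₀)‖ := by rw [add_sub_cancel]
          _ ≤ ‖h₀‖ + ‖u - h₀‖ := norm_add_le _ _
      have h2 : ‖u - h₀‖ = dist u h₀ := (dist_eq_norm u h₀).symm
      linarith [hdu]
    have hmvu : ‖mvCLM u‖ ≤ κ := by
      refine (mvCLM_norm_le u).trans ?_
      rw [hκdef]
      exact mul_le_mul_of_nonneg_left hunorm (by positivity)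
    have hux : u.mulVec x ∈ Metric.closedBall (0 : Fin (d+1) → ℝ) ρ := by
      rw [Metric.mem_closedBall, dist_zero_right]
      have h2 : ‖x‖ ≤ RK := by
        have h3 := hRKsub hx
        rwa [Metric.mem_closedBall, dist_zero_right] at h3
      calc ‖u.mulVec x‖ ≤ ((d:ℝ)+1) * ‖u‖ * ‖x‖ := mulVec_norm_le u x
        _ ≤ κ * RK := by
            refine mul_le_mul ?_ h2 (norm_nonneg _) hκ0.le
            rw [hκdef]
            exact mul_le_mul_of_nonneg_left hunorm (by positivity)
    have hεj : ε < EE j :=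
      lt_of_lt_of_le hεlt ((min_le_right _ _).trans (Finset.inf'_le EE hjt))
    have hterm1core : ‖iteratedFDeriv ℝ n (fun w => f ε (L.mulVec w) - f ε w) (u.mulVec x)‖
        ≤ CC j * ε^b := hJb j ε hε hεj (u.mulVec x) hux
    have hterm1 : ‖iteratedFDeriv ℝ n
        (fun z => (fun w => f ε (L.mulVec w) - f ε w) (u.mulVec z)) x‖
        ≤ (CC j * ε^b) * κ^n := by
      rw [hcomp]
      refine (ContinuousMultilinearMap.norm_compContinuousLinearMap_le _ _).trans ?_
      have hprod : (∏ _i : Fin n, ‖mvCLM u‖) = ‖mvCLM u‖^n := by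
        rw [Finset.prod_const, Finset.card_univ, Fintype.card_fin]
      rw [hprod]
      exact mul_le_mul hterm1core (pow_le_pow_left₀ (norm_nonneg _) hmvu n)
        (pow_nonneg (norm_nonneg _) n) (mul_nonneg (hCC j).le hεb)
    calc ‖iteratedFDeriv ℝ n (fun z => (fun w => f ε (L.mulVec w) - f ε w) (u.mulVec z)) x
          + iteratedFDeriv ℝ n (fun z => f ε (u.mulVec z) - f ε z) x‖
        ≤ ‖iteratedFDeriv ℝ n (fun z => (fun w => f ε (L.mulVec w) - f ε w) (u.mulVec z)) x‖
          + ‖iteratedFDeriv ℝ n (fun z => f ε (u.mulVec z) - f ε z) x‖ := norm_add_le _ _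
      _ ≤ (CC j * ε^b) * κ^n + ((m₀:ℝ)+1) * ε^b := add_le_add hterm1 hterm2
      _ ≤ (((m₀:ℝ)+1) + Csup * κ^n) * ε^b := by
          have hCle : CC j ≤ Csup := Finset.le_sup' CC hjt
          have h5 : CC j * (ε^b * κ^n) ≤ Csup * (ε^b * κ^n) :=
            mul_le_mul_of_nonneg_right hCle (mul_nonneg hεb (pow_nonneg hκ0.le n))
          nlinarith [h5]
end
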